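/- arXiv:2004.07656 — 11 statements merged into one kernel-verified Lean document; each statement's English description precedes it below -/
import Mathlib

section
/- Fix u_m > 0 and ε > 0, and define the sawtooth w(σ) := u_m·fract(σ + 1/2) − u_m/2, where fract denotes the fractional part. On the rising ramp of the PWM carrier, i.e. for t in the interval I_n := [(n − 1/2)ε, nε] with n ∈ ℤ, the carrier c(t) := u_m + 4 w(t/ε) is affine and increases from −u_m to u_m. If u : ℝ → ℝ is Lipschitz with constant λ < 4u_m/ε and satisfies −u_m < u(t) < u_m for all t, then there exists exactly one t₁ ∈ I_n with u(t₁) = c(t₁); that is, u crosses the carrier exactly once on each rising ramp. -/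
/-!
On the rising ramp `[(n - 1/2)ε, nε]` the carrier is the affine function of slope `4 u_m / ε`
running from `-u_m` to `u_m`. Since `u` is `λ`-Lipschitz with `λ < 4 u_m / ε`, the difference
`u - c` is continuous and strictly decreasing there, positive at the left end and negative at the
right end (because `|u| < u_m`), so it has exactly one zero by the intermediate value theorem.
-/

open Set

theorem existsUnique_mem_Icc_eq_of_strictAntiOn
    {α δ : Type*} [ConditionallyCompleteLinearOrder α] [TopologicalSpace α] [OrderTopology α]
    [DenselyOrdered α] [LinearOrder δ] [TopologicalSpace δ] [OrderClosedTopology δ]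
    {f : α → δ} {a b : α} {y : δ} (hab : a ≤ b) (hf : ContinuousOn f (Icc a b))
    (hanti : StrictAntiOn f (Icc a b)) (hy : y ∈ Icc (f b) (f a)) :
    ∃! t, t ∈ Icc a b ∧ f t = y := by
  obtain ⟨t, ht, hft⟩ := intermediate_value_Icc' hab hf hy
  exact ⟨t, ⟨ht, hft⟩, fun s ⟨hs, hfs⟩ => hanti.injOn hs ht (hfs.trans hft.symm)⟩

theorem continuous_of_abs_sub_le_mul {u : ℝ → ℝ} {lam : ℝ}
    (hlip : ∀ s t, |u s - u t| ≤ lam * |s - t|) : Continuous u := by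
  refine (LipschitzWith.of_dist_le_mul fun s t => ?_).continuous (K := lam.toNNReal)
  rw [Real.dist_eq, Real.dist_eq]
  exact (hlip s t).trans (mul_le_mul_of_nonneg_right (Real.le_coe_toNNReal lam) (abs_nonneg _))

theorem strictAnti_sub_affine_of_abs_sub_le_mul {u : ℝ → ℝ} {lam k : ℝ}
    (hlip : ∀ s t, |u s - u t| ≤ lam * |s - t|) (hk : lam < k) (d : ℝ) :
    StrictAnti fun t => u t - (k * t + d) := by
  intro s t hst
  have hpos : 0 < t - s := sub_pos.mpr hst
  have hincr : u t - u s ≤ lam * (t - s) := by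
    simpa only [abs_of_pos hpos] using (le_abs_self _).trans (hlip t s)
  have hslope : lam * (t - s) < k * (t - s) := mul_lt_mul_of_pos_right hk hpos
  linarith

theorem Int.fract_add_half_of_mem_Icc {σ : ℝ} {n : ℤ} (h : σ ∈ Icc ((n : ℝ) - 1/2) n) :
    Int.fract (σ + 1/2) = σ + 1/2 - n := by
  rw [← Int.fract_sub_intCast, Int.fract_eq_self]
  constructor <;> linarith [h.1, h.2]

theorem sawtoothCarrier_eq_of_mem_rising_ramp {u_m ε t : ℝ} {n : ℤ} (hε : 0 < ε)
    (ht : t ∈ Icc (((n : ℝ) - 1/2) * ε) (n * ε)) :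
    u_m + 4 * (u_m * Int.fract (t / ε + 1/2) - u_m/2) = 4 * u_m / ε * t + u_m * (1 - 4 * n) := by
  have hσ : t / ε ∈ Icc ((n : ℝ) - 1/2) n :=
    ⟨(le_div_iff₀ hε).mpr ht.1, (div_le_iff₀ hε).mpr ht.2⟩
  rw [Int.fract_add_half_of_mem_Icc hσ]
  ring

theorem pwm_unique_crossing_on_rising_ramp_general
    (u_m ε lam : ℝ) (hε : 0 < ε)
    (w : ℝ → ℝ) (hw : ∀ σ : ℝ, w σ = u_m * Int.fract (σ + 1/2) - u_m/2)
    (c : ℝ → ℝ) (hc : ∀ t : ℝ, c t = u_m + 4 * w (t/ε))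
    (u : ℝ → ℝ)
    (hlip : ∀ s t : ℝ, |u s - u t| ≤ lam * |s - t|)
    (hlam : lam < 4 * u_m / ε)
    (hrange : ∀ t : ℝ, -u_m < u t ∧ u t < u_m)
    (n : ℤ) :
    ∃! t₁ : ℝ, t₁ ∈ Set.Icc (((n : ℝ) - 1/2) * ε) ((n : ℝ) * ε) ∧ u t₁ = c t₁ := by
  set a : ℝ := ((n : ℝ) - 1/2) * ε
  set b : ℝ := (n : ℝ) * ε
  have hab : a ≤ b := mul_le_mul_of_nonneg_right (by linarith) hε.le
  set affine : ℝ → ℝ := fun t => 4 * u_m / ε * t + u_m * (1 - 4 * n)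
  have hcarrier : ∀ t ∈ Icc a b, c t = affine t := fun t ht => by
    rw [hc, hw, sawtoothCarrier_eq_of_mem_rising_ramp hε ht]
  have hdiff : EqOn (fun t => u t - affine t) (fun t => u t - c t) (Icc a b) := fun t ht => by
    simp only [hcarrier t ht]
  have hcont : ContinuousOn (fun t => u t - c t) (Icc a b) :=
    ((continuous_of_abs_sub_le_mul hlip).sub (by fun_prop)).continuousOn.congr hdiff.symm
  have hanti : StrictAntiOn (fun t => u t - c t) (Icc a b) :=
    (strictAnti_sub_affine_of_abs_sub_le_mul hlip hlam _).strictAntiOn _ |>.congr hdiff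
  have hca : c a = -u_m := by
    rw [hcarrier a (left_mem_Icc.mpr hab)]; simp only [affine, a]; field_simp; ring
  have hcb : c b = u_m := by
    rw [hcarrier b (right_mem_Icc.mpr hab)]; simp only [affine, b]; field_simp; ring
  have hzero : (0 : ℝ) ∈ Icc (u b - c b) (u a - c a) := by
    rw [hca, hcb]; constructor <;> linarith [hrange a, hrange b]
  simpa only [sub_eq_zero] using existsUnique_mem_Icc_eq_of_strictAntiOn hab hcont hanti hzero

/-- on each rising ramp of the PWM carrier, a slowly varying input
`u` (Lipschitz with constant `λ < 4 u_m / ε`, staying strictly inside the PWM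
range) crosses the carrier exactly once. -/
theorem pwm_unique_crossing_on_rising_ramp
    (u_m ε lam : ℝ) (hum : 0 < u_m) (hε : 0 < ε)
    (w : ℝ → ℝ) (hw : ∀ σ : ℝ, w σ = u_m * Int.fract (σ + 1/2) - u_m/2)
    (c : ℝ → ℝ) (hc : ∀ t : ℝ, c t = u_m + 4 * w (t/ε))
    (u : ℝ → ℝ)
    (hlip : ∀ s t : ℝ, |u s - u t| ≤ lam * |s - t|)
    (hlam : lam < 4 * u_m / ε)
    (hrange : ∀ t : ℝ, -u_m < u t ∧ u t < u_m)
    (n : ℤ) :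
    ∃! t₁ : ℝ, t₁ ∈ Set.Icc (((n : ℝ) - 1/2) * ε) ((n : ℝ) * ε) ∧ u t₁ = c t₁ :=
  pwm_unique_crossing_on_rising_ramp_general u_m ε lam hε w hw c hc u hlip hlam hrange n
end

section
/- Fix u_m > 0. With w(σ) := u_m·fract(σ + 1/2) − u_m/2 and the PWM function M(u,σ) := u_m + u_m·sgn(u − u_m − 4w(σ)) + u_m·sgn(u − u_m + 4w(σ)) (where sgn(x) = 1 if x > 0, −1 if x < 0, 0 if x = 0), for every u ∈ [−u_m, u_m] one has ∫₀¹ M(u,σ) dσ = u. Equivalently, the PWM-induced probing signal s₀(u,σ) := M(u,σ) − u satisfies ∫₀¹ s₀(u,σ) dσ = 0 for every u ∈ [−u_m, u_m]. -/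
/-!
On one period `σ ∈ (0, 1)` the sawtooth satisfies `|w σ| = u_m · min σ (1 - σ)`, and the two
signs in `M(u, σ)` cancel exactly when `4|w σ| > u_m - u`, while both are `-1` when
`4|w σ| < u_m - u`. Hence with `c = (u_m - u) / (4 u_m) ∈ [0, 1/2]` the signal `M(u, ·)` is
`-u_m` on `(0, c) ∪ (1 - c, 1)` and `u_m` on `(c, 1 - c)`, so its mean is
`u_m (1 - 2c) - u_m · 2c = u`.
-/

open MeasureTheory Set

namespace Real

theorem sign_sub_add_sign_add_of_add_abs_neg {d y : ℝ} (h : d + |y| < 0) :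
    sign (d - y) + sign (d + y) = -2 := by
  rw [sign_of_neg (by linarith [neg_abs_le y]), sign_of_neg (by linarith [le_abs_self y])]
  norm_num

theorem sign_sub_add_sign_add_of_abs_lt_abs {d y : ℝ} (h : |d| < |y|) :
    sign (d - y) + sign (d + y) = 0 := by
  rcases le_total 0 y with hy | hy
  · rw [abs_of_nonneg hy] at h
    rw [sign_of_neg (by linarith [le_abs_self d]), sign_of_pos (by linarith [neg_abs_le d])]
    norm_num
  · rw [abs_of_nonpos hy] at h
    rw [sign_of_pos (by linarith [neg_abs_le d]), sign_of_neg (by linarith [le_abs_self d])]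
    norm_num

end Real

theorem abs_fract_add_half_sub_half {σ : ℝ} (hσ : σ ∈ Icc 0 1) :
    |Int.fract (σ + 1 / 2) - 1 / 2| = min σ (1 - σ) := by
  obtain ⟨h0, h1⟩ := hσ
  rcases lt_or_ge σ (1 / 2) with hσ | hσ
  · rw [Int.fract_eq_self.mpr ⟨by linarith, by linarith⟩, min_eq_left (by linarith)]
    simpa using abs_of_nonneg h0
  · have hfract : Int.fract (σ + 1 / 2) = σ - 1 / 2 := by
      rw [show σ + 1 / 2 = σ - 1 / 2 + 1 by ring, Int.fract_add_one,
        Int.fract_eq_self.mpr ⟨by linarith, by linarith⟩]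
    rw [hfract, min_eq_right (by linarith), abs_of_nonpos (by linarith)]
    ring

namespace intervalIntegral

variable {f : ℝ → ℝ} {a b c A B : ℝ}

theorem intervalIntegrable_of_eqOn_Ioo_const (hab : a ≤ b) (h : EqOn f (fun _ => A) (Ioo a b)) :
    IntervalIntegrable f volume a b :=
  (intervalIntegrable_congr_uIoo (uIoo_of_le hab ▸ h)).mpr intervalIntegrable_const

theorem integral_of_eqOn_Ioo_const (hab : a ≤ b) (h : EqOn f (fun _ => A) (Ioo a b)) :
    ∫ x in a..b, f x = (b - a) * A := by
  rw [integral_congr_Ioo_of_le hab h, integral_const, smul_eq_mul]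

theorem intervalIntegrable_and_integral_of_symmetric_step (hc0 : 0 ≤ c) (hc : c ≤ 1 / 2)
    (hA : ∀ σ ∈ Ioo (0 : ℝ) 1, min σ (1 - σ) < c → f σ = A)
    (hB : ∀ σ ∈ Ioo (0 : ℝ) 1, c < min σ (1 - σ) → f σ = B) :
    IntervalIntegrable f volume 0 1 ∧
      ∫ σ in (0 : ℝ)..1, f σ = 2 * c * A + (1 - 2 * c) * B := by
  have h₁ : EqOn f (fun _ => A) (Ioo 0 c) := fun σ ⟨h0, h1⟩ =>
    hA σ ⟨h0, by linarith⟩ (min_lt_of_left_lt h1)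
  have h₂ : EqOn f (fun _ => B) (Ioo c (1 - c)) := fun σ ⟨h0, h1⟩ =>
    hB σ ⟨by linarith, by linarith⟩ (lt_min h0 (by linarith))
  have h₃ : EqOn f (fun _ => A) (Ioo (1 - c) 1) := fun σ ⟨h0, h1⟩ =>
    hA σ ⟨by linarith, h1⟩ (min_lt_of_right_lt (by linarith))
  have i₁ := intervalIntegrable_of_eqOn_Ioo_const hc0 h₁
  have i₂ := intervalIntegrable_of_eqOn_Ioo_const (by linarith) h₂
  have i₃ := intervalIntegrable_of_eqOn_Ioo_const (by linarith) h₃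
  refine ⟨(i₁.trans i₂).trans i₃, ?_⟩
  rw [← integral_add_adjacent_intervals (i₁.trans i₂) i₃,
    ← integral_add_adjacent_intervals i₁ i₂,
    integral_of_eqOn_Ioo_const hc0 h₁, integral_of_eqOn_Ioo_const (by linarith) h₂,
    integral_of_eqOn_Ioo_const (by linarith) h₃]
  ring

end intervalIntegral

/-- the PWM modulation function `M(u,·)` has mean `u` over one
period, equivalently the PWM-induced probing signal `s₀(u,·)` has zero mean. -/
theorem pwm_modulation_mean
    (u_m : ℝ) (hum : 0 < u_m)
    (w : ℝ → ℝ) (hw : ∀ σ : ℝ, w σ = u_m * Int.fract (σ + 1/2) - u_m/2)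
    (M : ℝ → ℝ → ℝ)
    (hM : ∀ u σ : ℝ, M u σ =
      u_m + u_m * Real.sign (u - u_m - 4 * w σ) + u_m * Real.sign (u - u_m + 4 * w σ))
    (s₀ : ℝ → ℝ → ℝ) (hs₀ : ∀ u σ : ℝ, s₀ u σ = M u σ - u) :
    ∀ u ∈ Set.Icc (-u_m) u_m,
      (∫ σ in (0:ℝ)..1, M u σ) = u ∧ (∫ σ in (0:ℝ)..1, s₀ u σ) = 0 := by
  intro u ⟨hul, hur⟩
  have hM' : ∀ σ, M u σ = u_m + u_m * (Real.sign (u - u_m - 4 * w σ) +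
      Real.sign (u - u_m + 4 * w σ)) := fun σ => by rw [hM]; ring
  have habs : ∀ σ ∈ Ioo (0 : ℝ) 1, |4 * w σ| = 4 * u_m * min σ (1 - σ) := fun σ hσ => by
    rw [hw, show 4 * (u_m * Int.fract (σ + 1 / 2) - u_m / 2) =
        4 * u_m * (Int.fract (σ + 1 / 2) - 1 / 2) by ring, abs_mul, abs_of_pos (by positivity),
      abs_fract_add_half_sub_half (Ioo_subset_Icc_self hσ)]
  set c := (u_m - u) / (4 * u_m) with hc
  have hc4 : 4 * u_m * c = u_m - u := by rw [hc]; field_simp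
  obtain ⟨hint, hstep⟩ := intervalIntegral.intervalIntegrable_and_integral_of_symmetric_step
    (f := M u) (A := -u_m) (B := u_m) (c := c)
    (div_nonneg (by linarith) (by positivity)) (by nlinarith)
    (fun σ hσ hlt => by
      rw [hM', Real.sign_sub_add_sign_add_of_add_abs_neg (by nlinarith [habs σ hσ])]; ring)
    (fun σ hσ hlt => by
      rw [hM', Real.sign_sub_add_sign_add_of_abs_lt_abs (by
        rw [habs σ hσ, abs_of_nonpos (by linarith)]; nlinarith)]; ring)
  have hmean : ∫ σ in (0 : ℝ)..1, M u σ = u := by rw [hstep]; nlinarith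
  refine ⟨hmean, ?_⟩
  simp_rw [hs₀]
  rw [intervalIntegral.integral_sub hint intervalIntegrable_const, hmean]
  simp
end

section
/- Fix u_m > 0 and u ∈ [−u_m, u_m]. With w(σ) := u_m·fract(σ + 1/2) − u_m/2, s₀(u,σ) := u_m − u + u_m·sgn(u − u_m − 4w(σ)) + u_m·sgn(u − u_m + 4w(σ)), and s₁(u,σ) := (1 − u/u_m)·w(σ) − |(u − u_m)/4 − w(σ)| + |(u − u_m)/4 + w(σ)|, the function s₁ is the zero-mean primitive of s₀ in the second argument; precisely: (i) s₁(u,0) = 0 and s₁(u,τ) = ∫₀^τ s₀(u,σ) dσ for all τ ∈ [0,1]; (ii) s₁(u,·) is 1-periodic; (iii) ∫₀¹ s₁(u,σ) dσ = 0. -/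
/-!
With `a = 1 - u/u_m`, `c = (u - u_m)/4` and `φ y = a y - |c - y| + |c + y|` one has
`s₁ u = φ ∘ w` and `s₀ u σ = u_m φ'(w σ)` wherever `φ` is differentiable at `w σ`. The sawtooth
`w` has slope `u_m` and jumps from `u_m/2` down to `-u_m/2`; since `|c| ≤ u_m/2`, `φ` vanishes at
both jump values, so `φ ∘ w` is continuous and the fundamental theorem of calculus, applied off the
countably many points where `w` jumps or `w = ±c`, gives (i). Periodicity is inherited from `w`,
and the mean vanishes because `φ` is odd and `w σ = u_m σ` on `[-1/2, 1/2)`.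
-/

open MeasureTheory Set Function Filter Topology

lemma Real.sign_eq_signType_sign (r : ℝ) : Real.sign r = (SignType.sign r : ℝ) := by
  rcases lt_trichotomy r 0 with h | rfl | h
  · simp [Real.sign_of_neg h, h]
  · simp
  · simp [Real.sign_of_pos h, h]

lemma Real.sign_mul_of_pos {a : ℝ} (ha : 0 < a) (x : ℝ) : Real.sign (a * x) = Real.sign x := by
  simp [Real.sign_eq_signType_sign, sign_mul, sign_pos ha]

lemma Real.measurable_sign : Measurable Real.sign :=
  Measurable.ite measurableSet_Iio measurable_const
    (Measurable.ite measurableSet_Ioi measurable_const measurable_const)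

lemma intervalIntegrable_sign_comp {f : ℝ → ℝ} (hf : Measurable f) (a b : ℝ) :
    IntervalIntegrable (fun x => Real.sign (f x)) volume a b :=
  (intervalIntegrable_const (c := (1 : ℝ))).mono_fun
    (Real.measurable_sign.comp hf).aestronglyMeasurable
    (ae_of_all _ fun x => by rcases Real.sign_apply_eq (f x) with h | h | h <;> simp [h])

lemma Int.hasDerivAt_fract {x : ℝ} (hx : Int.fract x ≠ 0) : HasDerivAt Int.fract 1 x := by
  have hlt : (⌊x⌋ : ℝ) < x := by
    linarith [(Int.fract_nonneg x).lt_of_ne' hx, Int.fract_add_floor x]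
  have hfloor : ∀ᶠ y in 𝓝 x, ⌊y⌋ = ⌊x⌋ := by
    filter_upwards [Ioo_mem_nhds hlt (Int.lt_floor_add_one x)] with y hy
    exact Int.floor_eq_iff.mpr ⟨hy.1.le, hy.2⟩
  exact ((hasDerivAt_id x).sub_const (⌊x⌋ : ℝ)).congr_of_eventuallyEq
    (hfloor.mono fun y hy => by simp [Int.fract, hy])

lemma Set.Countable.preimage_fract {T : Set ℝ} (hT : T.Countable) :
    (Int.fract ⁻¹' T).Countable :=
  (hT.biUnion fun t _ => countable_range fun n : ℤ => t + n).mono fun x hx =>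
    mem_biUnion (x := Int.fract x) hx (mem_range.mpr ⟨⌊x⌋, Int.fract_add_floor x⟩)

noncomputable def sawtooth (A σ : ℝ) : ℝ := A * Int.fract (σ + 1/2) - A/2

section sawtooth

variable (A : ℝ)

lemma sawtooth_periodic : Periodic (sawtooth A) 1 := fun σ => by
  simp only [sawtooth, add_right_comm σ 1, Int.fract_add_one]

lemma sawtooth_of_mem_Ico {σ : ℝ} (hσ : σ ∈ Ico (-(1/2)) (1/2)) : sawtooth A σ = A * σ := by
  rw [sawtooth, Int.fract_eq_self.mpr ⟨by linarith [hσ.1], by linarith [hσ.2]⟩]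
  ring

lemma sawtooth_zero : sawtooth A 0 = 0 := by
  simpa using sawtooth_of_mem_Ico A (σ := 0) (by norm_num)

lemma measurable_sawtooth : Measurable (sawtooth A) :=
  ((measurable_fract.comp (measurable_add_const _)).const_mul A).sub_const _

lemma hasDerivAt_sawtooth {σ : ℝ} (hσ : sawtooth A σ ≠ -(A/2)) :
    HasDerivAt (sawtooth A) A σ := by
  have hfract : Int.fract (σ + 1/2) ≠ 0 := fun h => hσ (by rw [sawtooth, h]; ring)
  exact ((((Int.hasDerivAt_fract hfract).comp σ ((hasDerivAt_id σ).add_const (1/2))).const_mul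
    A).sub_const (A/2)).congr_deriv (by simp)

lemma Set.Countable.preimage_sawtooth {A : ℝ} (hA : A ≠ 0) {T : Set ℝ} (hT : T.Countable) :
    (sawtooth A ⁻¹' T).Countable :=
  ((hT.preimage fun _ _ h => mul_left_cancel₀ hA (sub_left_injective h)).preimage_fract).preimage
    (add_left_injective (1/2))

lemma continuous_comp_sawtooth {φ : ℝ → ℝ} (hφ : Continuous φ) (h : φ (-(A/2)) = φ (A/2)) :
    Continuous fun σ => φ (sawtooth A σ) := by
  have : Continuous ((fun t => φ (A * t - A/2)) ∘ Int.fract) :=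
    ContinuousOn.comp_fract'' (by fun_prop) (by convert h using 2 <;> ring)
  exact this.comp (continuous_add_const (1/2))

end sawtooth

lemma Function.Odd.intervalIntegral_eq_zero {f : ℝ → ℝ} (hf : f.Odd) (a : ℝ) :
    ∫ x in -a..a, f x = 0 := by
  have h := intervalIntegral.integral_comp_neg (a := -a) (b := a) f
  simp only [neg_neg, hf.eq, intervalIntegral.integral_neg] at h
  linarith

section sawtoothCalculus

variable {A : ℝ} {φ : ℝ → ℝ}

lemma integral_comp_sawtooth_eq_sub {φ' : ℝ → ℝ} {T : Set ℝ} {a b : ℝ} (hA : A ≠ 0)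
    (hab : a ≤ b) (hT : T.Countable) (hφ : Continuous φ) (hφA : φ (-(A/2)) = φ (A/2))
    (hφ' : ∀ y ∉ T, HasDerivAt φ (φ' y) y)
    (hint : IntervalIntegrable (fun σ => A * φ' (sawtooth A σ)) volume a b) :
    ∫ σ in a..b, A * φ' (sawtooth A σ) = φ (sawtooth A b) - φ (sawtooth A a) := by
  refine integral_eq_of_hasDerivAt_off_countable_of_le (fun σ => φ (sawtooth A σ)) _ hab
    ((hT.insert (-(A/2))).preimage_sawtooth hA) (continuous_comp_sawtooth A hφ hφA).continuousOn
    (fun σ hσ => ?_) hint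
  have hσ : sawtooth A σ ≠ -(A/2) ∧ sawtooth A σ ∉ T := by simpa [not_or] using hσ.2
  exact ((hφ' _ hσ.2).comp σ (hasDerivAt_sawtooth A hσ.1)).congr_deriv (mul_comm _ _)

lemma integral_comp_sawtooth_eq_zero (hφ : φ.Odd) : ∫ σ in (0:ℝ)..1, φ (sawtooth A σ) = 0 := by
  have hper := ((sawtooth_periodic A).comp φ).intervalIntegral_add_eq 0 (-(1/2))
  norm_num at hper
  have hodd : (fun σ => φ (A * σ)).Odd := fun σ => by simp [hφ.eq]
  rw [hper, ← hodd.intervalIntegral_eq_zero (1/2)]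
  refine intervalIntegral.integral_congr_ae ?_
  filter_upwards [Measure.ae_ne volume (1/2)] with σ hne hσ
  rw [uIoc_of_le (by norm_num)] at hσ
  rw [sawtooth_of_mem_Ico A ⟨hσ.1.le, hσ.2.lt_of_ne hne⟩]

end sawtoothCalculus

def pwmProfile (a c y : ℝ) : ℝ := a * y - |c - y| + |c + y|

section pwmProfile

variable (a c : ℝ)

lemma continuous_pwmProfile : Continuous (pwmProfile a c) := by
  unfold pwmProfile
  fun_prop

lemma pwmProfile_odd : (pwmProfile a c).Odd := fun y => by
  rw [pwmProfile, pwmProfile, sub_neg_eq_add, ← sub_eq_add_neg]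
  ring

lemma pwmProfile_of_abs_le {y : ℝ} (h : |c| ≤ y) : pwmProfile a c y = a * y + 2 * c := by
  obtain ⟨h₁, h₂⟩ := abs_le.mp h
  rw [pwmProfile, abs_of_nonpos (by linarith), abs_of_nonneg (by linarith)]
  ring

lemma hasDerivAt_pwmProfile {y : ℝ} (h₁ : y ≠ c) (h₂ : y ≠ -c) :
    HasDerivAt (pwmProfile a c) (a + Real.sign (c - y) + Real.sign (c + y)) y := by
  have hsub := (hasDerivAt_abs (sub_ne_zero.mpr h₁.symm)).comp y ((hasDerivAt_id y).const_sub c)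
  have hadd := (hasDerivAt_abs fun h => h₂ (eq_neg_of_add_eq_zero_right h)).comp y
    ((hasDerivAt_id y).const_add c)
  exact ((((hasDerivAt_id y).const_mul a).sub hsub).add hadd).congr_deriv
    (by simp [Real.sign_eq_signType_sign])

lemma pwmProfile_half_eq_zero {m u : ℝ} (hm : 0 < m) (hu : u ∈ Icc (-m) m) :
    pwmProfile (1 - u/m) ((u - m)/4) (m/2) = 0 := by
  rw [pwmProfile_of_abs_le _ _ (abs_le.mpr ⟨by linarith [hu.1], by linarith [hu.2]⟩)]
  field_simp
  ring

variable {a c}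

lemma integral_comp_sawtooth_eq_pwmProfile {A τ : ℝ} (hA : A ≠ 0) (hτ : 0 ≤ τ)
    (hφ : pwmProfile a c (A/2) = 0) :
    ∫ σ in (0:ℝ)..τ, A * (a + Real.sign (c - sawtooth A σ) + Real.sign (c + sawtooth A σ)) =
      pwmProfile a c (sawtooth A τ) := by
  have hint : IntervalIntegrable
      (fun σ => A * (a + Real.sign (c - sawtooth A σ) + Real.sign (c + sawtooth A σ))) volume 0 τ :=
    ((intervalIntegrable_const.add (intervalIntegrable_sign_comp
      (measurable_const.sub (measurable_sawtooth A)) _ _)).add (intervalIntegrable_sign_comp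
      (measurable_const.add (measurable_sawtooth A)) _ _)).const_mul A
  have hderiv : ∀ y ∉ ({c, -c} : Set ℝ),
      HasDerivAt (pwmProfile a c) (a + Real.sign (c - y) + Real.sign (c + y)) y := fun y hy => by
    simp only [mem_insert_iff, mem_singleton_iff, not_or] at hy
    exact hasDerivAt_pwmProfile a c hy.1 hy.2
  rw [integral_comp_sawtooth_eq_sub (φ' := fun y => a + Real.sign (c - y) + Real.sign (c + y))
    hA hτ (by simp) (continuous_pwmProfile a c) (by rw [(pwmProfile_odd a c).eq, hφ, neg_zero])
    hderiv hint, sawtooth_zero, (pwmProfile_odd a c).map_zero, sub_zero]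

end pwmProfile

/-- the explicit formula `s₁` is the zero-mean primitive in the
second argument of the PWM-induced probing signal `s₀`. -/
theorem pwm_s1_is_zero_mean_primitive
    (u_m : ℝ) (hum : 0 < u_m) (u : ℝ) (hu : u ∈ Set.Icc (-u_m) u_m)
    (w : ℝ → ℝ) (hw : ∀ σ : ℝ, w σ = u_m * Int.fract (σ + 1/2) - u_m/2)
    (s₀ : ℝ → ℝ → ℝ)
    (hs₀ : ∀ v σ : ℝ, s₀ v σ =
      u_m - v + u_m * Real.sign (v - u_m - 4 * w σ) + u_m * Real.sign (v - u_m + 4 * w σ))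
    (s₁ : ℝ → ℝ → ℝ)
    (hs₁ : ∀ v σ : ℝ, s₁ v σ =
      (1 - v/u_m) * w σ - |(v - u_m)/4 - w σ| + |(v - u_m)/4 + w σ|) :
    (s₁ u 0 = 0 ∧ ∀ τ ∈ Set.Icc (0:ℝ) 1, s₁ u τ = ∫ σ in (0:ℝ)..τ, s₀ u σ) ∧
      Function.Periodic (s₁ u) 1 ∧
      (∫ σ in (0:ℝ)..1, s₁ u σ) = 0 := by
  have hw' : w = sawtooth u_m := funext hw
  have hs₁' : s₁ u = fun σ => pwmProfile (1 - u/u_m) ((u - u_m)/4) (sawtooth u_m σ) := by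
    funext σ
    rw [hs₁, hw', pwmProfile]
  have hs₀' : s₀ u = fun σ => u_m * (1 - u/u_m + Real.sign ((u - u_m)/4 - sawtooth u_m σ) +
      Real.sign ((u - u_m)/4 + sawtooth u_m σ)) := by
    funext σ
    rw [hs₀, hw', ← Real.sign_mul_of_pos four_pos ((u - u_m)/4 - _),
      ← Real.sign_mul_of_pos four_pos ((u - u_m)/4 + _)]
    field_simp
  refine ⟨⟨by simp [hs₁', sawtooth_zero, pwmProfile], fun τ hτ => ?_⟩, ?_, ?_⟩
  · rw [hs₀', hs₁', integral_comp_sawtooth_eq_pwmProfile hum.ne' hτ.1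
      (pwmProfile_half_eq_zero hum hu)]
  · rw [hs₁']
    exact fun σ => congrArg (pwmProfile _ _) (sawtooth_periodic u_m σ)
  · rw [hs₁']
    exact integral_comp_sawtooth_eq_zero (pwmProfile_odd _ _)
end

section
/- Fix u_m > 0. The function s₁(u,σ) := (1 − u/u_m)·w(σ) − |(u − u_m)/4 − w(σ)| + |(u − u_m)/4 + w(σ)|, with w(σ) := u_m·fract(σ + 1/2) − u_m/2, is jointly continuous on [−u_m, u_m] × ℝ; in particular, even though w has a jump discontinuity at every σ ∈ 1/2 + ℤ, the function σ ↦ s₁(u,σ) is continuous there (its one-sided limits both equal 0). -/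
/-!
Write `s₁(u, σ) = S(u, x)` with `x = u_m * fract (σ + 1/2) - u_m/2` and `S` jointly continuous.
Then `s₁` is a continuous function of `(u, fract (σ + 1/2))`, and the only discontinuities of
`fract` are jumps from `1` to `0`, i.e. of `x` from `u_m/2` to `-u_m/2`. For `|u| ≤ u_m` the two
absolute values in `S` have fixed signs at `x = ±u_m/2`, and `S` vanishes at both points, so the
jumps of `w` are invisible in `s₁`.
-/

open Set Function

theorem ContinuousOn.comp_fract_snd {α β γ : Type*} [Ring α] [LinearOrder α] [FloorRing α]
    [TopologicalSpace α] [IsStrictOrderedRing α] [OrderTopology α]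
    [TopologicalSpace β] [TopologicalSpace γ] {f : β → α → γ} {s : Set β}
    (h : ContinuousOn (uncurry f) (s ×ˢ Icc 0 1)) (hf : ∀ b ∈ s, f b 0 = f b 1) :
    ContinuousOn (fun p : β × α => f p.1 (Int.fract p.2)) (s ×ˢ univ) := by
  have hs : Continuous fun q : s × α => f q.1 (Int.fract q.2) := by
    refine ContinuousOn.comp_fract' (f := fun (b : s) t => f b t) ?_ fun b => hf b b.2
    exact h.comp (continuous_subtype_val.prodMap continuous_id).continuousOn
      fun q hq => ⟨q.1.2, hq.2⟩
  rw [continuousOn_iff_continuous_domRestrict]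
  exact hs.comp <| (continuous_fst.comp continuous_subtype_val).subtype_mk (fun p => p.2.1)
    |>.prodMk (continuous_snd.comp continuous_subtype_val)

/-- `pwmS1 u_m v x` is `s₁(v, σ)` with `x` standing for `w σ`. -/
noncomputable def pwmS1 (u_m v x : ℝ) : ℝ :=
  (1 - v / u_m) * x - |(v - u_m) / 4 - x| + |(v - u_m) / 4 + x|

theorem pwmS1_half_eq_zero {u_m v : ℝ} (hum : u_m ≠ 0) (hv : v ∈ Icc (-u_m) u_m) :
    pwmS1 u_m v (u_m / 2) = 0 := by
  obtain ⟨hv₁, hv₂⟩ := hv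
  rw [pwmS1, abs_of_nonpos (by linarith), abs_of_nonneg (by linarith)]
  field_simp
  ring

theorem pwmS1_neg_half_eq_zero {u_m v : ℝ} (hum : u_m ≠ 0) (hv : v ∈ Icc (-u_m) u_m) :
    pwmS1 u_m v (-(u_m / 2)) = 0 := by
  obtain ⟨hv₁, hv₂⟩ := hv
  rw [pwmS1, abs_of_nonneg (by linarith), abs_of_nonpos (by linarith)]
  field_simp
  ring

/-- `s₁` is jointly continuous on `[-u_m, u_m] × ℝ`; in
particular, for each `u` in the PWM range, `σ ↦ s₁ u σ` is continuous on all
of `ℝ` (even across the jumps of the sawtooth `w`). -/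
theorem pwm_s1_continuous
    (u_m : ℝ) (hum : 0 < u_m)
    (w : ℝ → ℝ) (hw : ∀ σ : ℝ, w σ = u_m * Int.fract (σ + 1/2) - u_m/2)
    (s₁ : ℝ → ℝ → ℝ)
    (hs₁ : ∀ v σ : ℝ, s₁ v σ =
      (1 - v/u_m) * w σ - |(v - u_m)/4 - w σ| + |(v - u_m)/4 + w σ|) :
    ContinuousOn (fun p : ℝ × ℝ => s₁ p.1 p.2)
        (Set.Icc (-u_m) u_m ×ˢ (Set.univ : Set ℝ)) ∧
      ∀ u ∈ Set.Icc (-u_m) u_m, Continuous (fun σ : ℝ => s₁ u σ) := by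
  have hprofile : ContinuousOn (fun p : ℝ × ℝ => pwmS1 u_m p.1 (u_m * Int.fract p.2 - u_m / 2))
      (Icc (-u_m) u_m ×ˢ univ) := by
    refine ContinuousOn.comp_fract_snd (f := fun v t => pwmS1 u_m v (u_m * t - u_m / 2))
      (by unfold pwmS1; fun_prop) fun v hv => ?_
    rw [mul_zero, zero_sub, mul_one, sub_half, pwmS1_neg_half_eq_zero hum.ne' hv,
      pwmS1_half_eq_zero hum.ne' hv]
  have hjoint : ContinuousOn (fun p : ℝ × ℝ => s₁ p.1 p.2) (Icc (-u_m) u_m ×ˢ univ) := by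
    refine (hprofile.comp (s := Icc (-u_m) u_m ×ˢ univ) (f := fun p => (p.1, p.2 + 1 / 2))
      (by fun_prop) fun p hp => ⟨hp.1, trivial⟩).congr fun p _ => ?_
    simp only [comp_apply, pwmS1, hs₁, hw]
  exact ⟨hjoint, fun u hu =>
    hjoint.comp_continuous (continuous_const.prodMk continuous_id) fun _ => ⟨hu, trivial⟩⟩
end

section
/- Fix u_m > 0. The PWM-induced probing signal s₀(u,σ) := u_m − u + u_m·sgn(u − u_m − 4w(σ)) + u_m·sgn(u − u_m + 4w(σ)), with w(σ) := u_m·fract(σ + 1/2) − u_m/2, is Lipschitz in its first argument in the L¹-in-σ sense: for all u, u' ∈ [−u_m, u_m], ∫₀¹ |s₀(u,σ) − s₀(u',σ)| dσ ≤ 2|u − u'|. -/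
/-!
Write `θ = fract (σ + 1/2)`. The two signs in `s₀ v σ` switch at the thresholds
`u_m + 4 w σ = 4 u_m θ - u_m` and `u_m - 4 w σ = 3 u_m - 4 u_m θ`, so `s₀ u σ - s₀ u' σ`
is `u' - u` plus, for each threshold lying between `u` and `u'`, a jump of size at most `2 u_m`
(this majorant is `pwmJumpBound u_m u u' θ`).
As `σ` runs over a period, `θ` is uniformly distributed on `[0, 1)`, so each threshold sweeps an
interval at speed `4 u_m` and lies between `u` and `u'` for a time at most `|u - u'| / (4 u_m)`.
Hence the `L¹` distance is at most `|u - u'| + 2 · 2 u_m · |u - u'| / (4 u_m) = 2 |u - u'|`.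
-/

open MeasureTheory Set
open scoped Interval

lemma abs_sign_sub_sign_le (u u' c : ℝ) :
    |Real.sign (u - c) - Real.sign (u' - c)| ≤ 2 * (uIcc u u').indicator 1 c := by
  by_cases hc : c ∈ uIcc u u'
  · rw [indicator_of_mem hc, Pi.one_apply, mul_one]
    rcases Real.sign_apply_eq (u - c) with h | h | h <;>
      rcases Real.sign_apply_eq (u' - c) with h' | h' | h' <;> rw [h, h'] <;> norm_num
  · rw [indicator_of_notMem hc, mul_zero, abs_nonpos_iff, sub_eq_zero]
    rw [mem_uIcc] at hc
    rcases lt_or_ge c u with h | h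
    · rw [Real.sign_of_pos (sub_pos.2 h), Real.sign_of_pos (sub_pos.2 (by grind))]
    · rw [Real.sign_of_neg (by grind), Real.sign_of_neg (by grind)]

lemma abs_sub_add_sign_add_sign_le {k : ℝ} (hk : 0 ≤ k) (u u' c₁ c₂ : ℝ) :
    |(k * Real.sign (u - c₁) + k * Real.sign (u - c₂) - u) -
        (k * Real.sign (u' - c₁) + k * Real.sign (u' - c₂) - u')| ≤
      |u - u'| + 2 * k * (uIcc u u').indicator 1 c₁ + 2 * k * (uIcc u u').indicator 1 c₂ := by
  have h₁ := mul_le_mul_of_nonneg_left (abs_sign_sub_sign_le u u' c₁) hk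
  have h₂ := mul_le_mul_of_nonneg_left (abs_sign_sub_sign_le u u' c₂) hk
  calc _ = |(u' - u) + k * (Real.sign (u - c₁) - Real.sign (u' - c₁)) +
          k * (Real.sign (u - c₂) - Real.sign (u' - c₂))| := by ring_nf
    _ ≤ |u' - u| + |k * (Real.sign (u - c₁) - Real.sign (u' - c₁))| +
          |k * (Real.sign (u - c₂) - Real.sign (u' - c₂))| := abs_add_three _ _ _
    _ ≤ _ := by rw [abs_sub_comm, abs_mul, abs_mul, abs_of_nonneg hk]; linarith

lemma eqOn_comp_fract_uIoo (h : ℝ → ℝ) : EqOn (fun t => h (Int.fract t)) h (uIoo 0 1) := by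
  intro t ht
  rw [uIoo_of_le zero_le_one] at ht
  exact congrArg h (Int.fract_eq_self.2 ⟨ht.1.le, ht.2⟩)

lemma IntervalIntegrable.comp_fract_add {h : ℝ → ℝ} (hh : IntervalIntegrable h volume 0 1)
    (s a b : ℝ) : IntervalIntegrable (fun σ => h (Int.fract (σ + s))) volume a b := by
  have hper : Function.Periodic (fun x => h (Int.fract x)) 1 := (Int.fract_periodic ℝ).comp h
  have hfract := hh.congr_uIoo (eqOn_comp_fract_uIoo h).symm
  simpa using (hper.intervalIntegrable₀ one_ne_zero hfract (a + s) (b + s)).comp_add_right s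

lemma intervalIntegral_comp_fract_add (h : ℝ → ℝ) (s : ℝ) :
    ∫ σ in (0:ℝ)..1, h (Int.fract (σ + s)) = ∫ t in (0:ℝ)..1, h t := by
  have hper : Function.Periodic (fun x => h (Int.fract x)) 1 := (Int.fract_periodic ℝ).comp h
  rw [intervalIntegral.integral_comp_add_right (fun x => h (Int.fract x)), zero_add, add_comm,
    hper.intervalIntegral_add_eq s 0, zero_add]
  exact intervalIntegral.integral_congr_uIoo (eqOn_comp_fract_uIoo h)

lemma intervalIntegral_comp_mul_add_le_integral_div {f : ℝ → ℝ} (hf : Integrable f)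
    (hf₀ : 0 ≤ f) {a : ℝ} (ha : a ≠ 0) (b : ℝ) :
    ∫ t in (0:ℝ)..1, f (a * t + b) ≤ (∫ x, f x) / |a| := by
  have hbound : |∫ x in a * 0 + b..a * 1 + b, f x| ≤ ∫ x, f x :=
    calc |∫ x in a * 0 + b..a * 1 + b, f x|
        = ∫ x in Ι (a * 0 + b) (a * 1 + b), f x := by
          rw [intervalIntegral.abs_integral_eq_abs_integral_uIoc,
            abs_of_nonneg (integral_nonneg hf₀)]
      _ ≤ ∫ x, f x := setIntegral_le_integral hf (ae_of_all _ hf₀)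
  rw [intervalIntegral.integral_comp_mul_add _ ha, smul_eq_mul, div_eq_inv_mul, ← abs_inv]
  exact (le_abs_self _).trans ((abs_mul _ _).trans_le
    (mul_le_mul_of_nonneg_left hbound (abs_nonneg _)))

lemma integrable_indicator_uIcc_one (p q : ℝ) :
    Integrable ((uIcc p q).indicator (1 : ℝ → ℝ)) :=
  (integrable_indicator_iff measurableSet_uIcc).2 (integrableOn_const measure_Icc_lt_top.ne)

lemma intervalIntegrable_indicator_uIcc_comp_mul_add {a : ℝ} (ha : a ≠ 0) (b p q : ℝ) :
    IntervalIntegrable (fun t => (uIcc p q).indicator (1 : ℝ → ℝ) (a * t + b)) volume 0 1 :=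
  ((integrable_indicator_uIcc_one p q).comp_add_right b |>.comp_mul_left' ha).intervalIntegrable

lemma intervalIntegral_indicator_uIcc_comp_mul_add_le {a : ℝ} (ha : a ≠ 0) (b p q : ℝ) :
    ∫ t in (0:ℝ)..1, (uIcc p q).indicator 1 (a * t + b) ≤ |q - p| / |a| := by
  rw [← Real.volume_real_interval, ← integral_indicator_one measurableSet_uIcc]
  exact intervalIntegral_comp_mul_add_le_integral_div (integrable_indicator_uIcc_one p q)
    (indicator_nonneg fun _ _ => zero_le_one) ha b

noncomputable def pwmJumpBound (k u u' θ : ℝ) : ℝ :=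
  |u - u'| + 2 * k * (uIcc u u').indicator 1 (4 * k * θ + -k) +
    2 * k * (uIcc u u').indicator 1 (-(4 * k) * θ + 3 * k)

section PwmJumpBound

variable {k : ℝ} (hk : 0 < k) (u u' : ℝ)
include hk

lemma intervalIntegrable_pwmJumpBound : IntervalIntegrable (pwmJumpBound k u u') volume 0 1 :=
  have h4 : 4 * k ≠ 0 := by positivity
  (intervalIntegrable_const.add
    ((intervalIntegrable_indicator_uIcc_comp_mul_add h4 _ u u').const_mul _)).add
    ((intervalIntegrable_indicator_uIcc_comp_mul_add (neg_ne_zero.2 h4) _ u u').const_mul _)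

lemma intervalIntegral_pwmJumpBound_le :
    ∫ θ in (0:ℝ)..1, pwmJumpBound k u u' θ ≤ 2 * |u - u'| := by
  have h4 : 4 * k ≠ 0 := by positivity
  have h4' : -(4 * k) ≠ 0 := neg_ne_zero.2 h4
  have hind₁ := (intervalIntegrable_indicator_uIcc_comp_mul_add h4 (-k) u u').const_mul (2 * k)
  have hind₂ :=
    (intervalIntegrable_indicator_uIcc_comp_mul_add h4' (3 * k) u u').const_mul (2 * k)
  calc ∫ θ in (0:ℝ)..1, pwmJumpBound k u u' θ
      ≤ |u - u'| + 2 * k * (|u' - u| / |4 * k|) + 2 * k * (|u' - u| / |-(4 * k)|) := by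
        unfold pwmJumpBound
        rw [intervalIntegral.integral_add (intervalIntegrable_const.add hind₁) hind₂,
          intervalIntegral.integral_add intervalIntegrable_const hind₁,
          intervalIntegral.integral_const, intervalIntegral.integral_const_mul,
          intervalIntegral.integral_const_mul]
        gcongr
        · simp
        · exact intervalIntegral_indicator_uIcc_comp_mul_add_le h4 _ _ _
        · exact intervalIntegral_indicator_uIcc_comp_mul_add_le h4' _ _ _
    _ = 2 * |u - u'| := by
        rw [abs_neg, abs_of_pos (by positivity : 0 < 4 * k), abs_sub_comm]
        field_simp; ring

end PwmJumpBound

/-- the PWM probing signal `s₀` is Lipschitz in its first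
argument in the `L¹`-in-`σ` sense, with constant `2`. -/
theorem pwm_s0_L1_lipschitz_first_argument
    (u_m : ℝ) (hum : 0 < u_m)
    (w : ℝ → ℝ) (hw : ∀ σ : ℝ, w σ = u_m * Int.fract (σ + 1/2) - u_m/2)
    (s₀ : ℝ → ℝ → ℝ)
    (hs₀ : ∀ v σ : ℝ, s₀ v σ =
      u_m - v + u_m * Real.sign (v - u_m - 4 * w σ) + u_m * Real.sign (v - u_m + 4 * w σ)) :
    ∀ u ∈ Set.Icc (-u_m) u_m, ∀ u' ∈ Set.Icc (-u_m) u_m,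
      (∫ σ in (0:ℝ)..1, |s₀ u σ - s₀ u' σ|) ≤ 2 * |u - u'| := by
  intro u _ u' _
  have hpt (σ : ℝ) :
      |s₀ u σ - s₀ u' σ| ≤ pwmJumpBound u_m u u' (Int.fract (σ + 1/2)) := by
    unfold pwmJumpBound
    convert abs_sub_add_sign_add_sign_le hum.le u u' (4 * u_m * Int.fract (σ + 1/2) + -u_m)
      (-(4 * u_m) * Int.fract (σ + 1/2) + 3 * u_m) using 2
    rw [hs₀, hs₀, hw]; ring_nf
  calc (∫ σ in (0:ℝ)..1, |s₀ u σ - s₀ u' σ|)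
      ≤ ∫ σ in (0:ℝ)..1, pwmJumpBound u_m u u' (Int.fract (σ + 1/2)) := by
        simp only [intervalIntegral.integral_of_le zero_le_one]
        exact integral_mono_of_nonneg (ae_of_all _ fun _ => abs_nonneg _)
          ((intervalIntegrable_pwmJumpBound hum u u').comp_fract_add _ 0 1).1 (ae_of_all _ hpt)
    _ = ∫ θ in (0:ℝ)..1, pwmJumpBound u_m u u' θ := intervalIntegral_comp_fract_add _ _
    _ ≤ 2 * |u - u'| := intervalIntegral_pwmJumpBound_le hum u u'
end

section
/- Fix u_m > 0 and let s₁(u,σ) := (1 − u/u_m)·w(σ) − |(u − u_m)/4 − w(σ)| + |(u − u_m)/4 + w(σ)| with w(σ) := u_m·fract(σ + 1/2) − u_m/2. Then for every u with |u| < u_m, the mean square over one period is strictly positive: ∫₀¹ s₁(u,σ)² dσ > 0. (By contrast, s₁(u_m, σ) = 0 for all σ.) -/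
/-!
On `(0, 1/2)` the sawtooth is linear, `w σ = u_m σ`, and for `|u| < u_m` the probing signal is
strictly negative there: it equals `-(u + u_m) σ` while `u_m σ < (u_m - u)/4` and
`(u_m - u)(σ - 1/2)` afterwards. So `s₁(u, ·)²` is positive on a set of measure `1/2`; it is
bounded and measurable, hence its integral over `[0, 1]` is positive.
-/

open Set MeasureTheory intervalIntegral

noncomputable def pwmCarrier (u_m σ : ℝ) : ℝ := u_m * Int.fract (σ + 1/2) - u_m/2

noncomputable def pwmProbe (u_m v σ : ℝ) : ℝ :=
  (1 - v/u_m) * pwmCarrier u_m σ - |(v - u_m)/4 - pwmCarrier u_m σ|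
    + |(v - u_m)/4 + pwmCarrier u_m σ|

theorem abs_mul_sub_abs_sub_add_abs_add_le (c a x : ℝ) :
    |(c * x - |a - x| + |a + x|)| ≤ (|c| + 2) * |x| := by
  have hdiff : |(|a + x| - |a - x|)| ≤ 2 * |x| :=
    calc |(|a + x| - |a - x|)| ≤ |(a + x) - (a - x)| := abs_abs_sub_abs_le_abs_sub _ _
      _ = 2 * |x| := by rw [show (a + x) - (a - x) = 2 * x by ring, abs_mul, abs_two]
  calc |(c * x - |a - x| + |a + x|)| = |c * x + (|a + x| - |a - x|)| := by ring_nf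
    _ ≤ |c| * |x| + 2 * |x| := (abs_add_le _ _).trans (by rw [abs_mul]; gcongr)
    _ = (|c| + 2) * |x| := by ring

section

variable {u_m : ℝ}

theorem pwmCarrier_eq_of_mem_Ico {σ : ℝ} (hσ : σ ∈ Ico (-1/2 : ℝ) (1/2)) :
    pwmCarrier u_m σ = u_m * σ := by
  rw [pwmCarrier, Int.fract_eq_self.mpr ⟨by linarith [hσ.1], by linarith [hσ.2]⟩]
  ring

theorem abs_pwmCarrier_le (σ : ℝ) : |pwmCarrier u_m σ| ≤ |u_m| / 2 := by
  have h : |Int.fract (σ + 1/2) - 1/2| ≤ 1/2 :=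
    abs_le.mpr ⟨by linarith [Int.fract_nonneg (σ + 1/2)],
      by linarith [Int.fract_lt_one (σ + 1/2)]⟩
  calc |pwmCarrier u_m σ| = |u_m| * |Int.fract (σ + 1/2) - 1/2| := by
        rw [pwmCarrier, ← abs_mul]; ring_nf
    _ ≤ |u_m| * (1/2) := by gcongr
    _ = |u_m| / 2 := by ring

theorem measurable_pwmProbe (v : ℝ) : Measurable (pwmProbe u_m v) := by
  unfold pwmProbe pwmCarrier
  fun_prop

theorem abs_pwmProbe_le (v σ : ℝ) :
    |pwmProbe u_m v σ| ≤ (|1 - v/u_m| + 2) * (|u_m| / 2) :=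
  (abs_mul_sub_abs_sub_add_abs_add_le _ _ _).trans (by gcongr; exact abs_pwmCarrier_le σ)

theorem intervalIntegrable_pwmProbe_sq (v a b : ℝ) :
    IntervalIntegrable (fun σ => pwmProbe u_m v σ ^ 2) volume a b := by
  refine (intervalIntegrable_const (c := ((|1 - v/u_m| + 2) * (|u_m| / 2)) ^ 2)).mono_fun'
    ((measurable_pwmProbe v).pow_const 2).aestronglyMeasurable (ae_of_all _ fun σ => ?_)
  simp only [Real.norm_eq_abs, abs_pow]
  exact pow_le_pow_left₀ (abs_nonneg _) (abs_pwmProbe_le v σ) 2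

theorem pwmProbe_neg {u σ : ℝ} (hu : |u| < u_m) (hσ : σ ∈ Ioo (0 : ℝ) (1/2)) :
    pwmProbe u_m u σ < 0 := by
  obtain ⟨hu_lo, hu_hi⟩ := abs_lt.mp hu
  obtain ⟨hσ0, hσ1⟩ := hσ
  have hum : 0 < u_m := (abs_nonneg u).trans_lt hu
  rw [pwmProbe, pwmCarrier_eq_of_mem_Ico ⟨by linarith, hσ1⟩,
    show (1 - u/u_m) * (u_m * σ) = (u_m - u) * σ by field_simp,
    abs_of_neg (by nlinarith : (u - u_m)/4 - u_m * σ < 0)]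
  rcases le_or_gt 0 ((u - u_m)/4 + u_m * σ) with h | h
  · rw [abs_of_nonneg h]
    nlinarith [mul_pos (sub_pos.mpr hu_hi) (by linarith : (0:ℝ) < 1/2 - σ)]
  · rw [abs_of_neg h]
    nlinarith [mul_pos (by linarith : (0:ℝ) < u + u_m) hσ0]

theorem integral_pwmProbe_sq_pos {u : ℝ} (hu : |u| < u_m) :
    0 < ∫ σ in (0:ℝ)..1, pwmProbe u_m u σ ^ 2 := by
  have hsupp : Ioo (0 : ℝ) (1/2) ⊆ Function.support (fun σ => pwmProbe u_m u σ ^ 2) ∩ Ioc 0 1 :=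
    fun σ hσ => ⟨pow_ne_zero 2 (pwmProbe_neg hu hσ).ne,
      Ioo_subset_Ioc_self (Ioo_subset_Ioo_right (by norm_num) hσ)⟩
  rw [integral_pos_iff_support_of_nonneg_ae (ae_of_all _ fun σ => sq_nonneg _)
    (intervalIntegrable_pwmProbe_sq u 0 1)]
  exact ⟨one_pos, ((Measure.measure_Ioo_pos _).mpr (by norm_num)).trans_le (measure_mono hsupp)⟩

theorem pwmProbe_self (hum : u_m ≠ 0) (σ : ℝ) : pwmProbe u_m u_m σ = 0 := by
  simp [pwmProbe, div_self hum]

end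

/-- the mean square of `s₁(u,·)` over one period is strictly
positive for `u` strictly inside the PWM range (while `s₁(u_m,·) ≡ 0`). -/
theorem pwm_s1_mean_square_positive
    (u_m : ℝ) (hum : 0 < u_m)
    (w : ℝ → ℝ) (hw : ∀ σ : ℝ, w σ = u_m * Int.fract (σ + 1/2) - u_m/2)
    (s₁ : ℝ → ℝ → ℝ)
    (hs₁ : ∀ v σ : ℝ, s₁ v σ =
      (1 - v/u_m) * w σ - |(v - u_m)/4 - w σ| + |(v - u_m)/4 + w σ|) :
    (∀ u : ℝ, |u| < u_m → 0 < ∫ σ in (0:ℝ)..1, (s₁ u σ)^2) ∧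
      ∀ σ : ℝ, s₁ u_m σ = 0 := by
  obtain rfl : w = pwmCarrier u_m := funext hw
  obtain rfl : s₁ = pwmProbe u_m := funext fun v => funext (hs₁ v)
  exact ⟨fun u hu => integral_pwmProbe_sq_pos hu, pwmProbe_self hum.ne'⟩
end

section
/- (Extension of Besjes' lemma.) Let T > 0, L > 0, ε > 0, λ > 0, c₀ > 0. Let φ : ℝⁿ × ℝ → ℝᵐ be measurable, T-periodic in its second argument, with ∫₀^T φ(X,s) ds = 0 for every X, and ‖φ(X,s)‖ ≤ c₀ for all X, s. Let x : [0, L/ε] → ℝⁿ be continuous and assume that for every a ≥ 0 with a + T ≤ L/ε, ∫_a^{a+T} ‖φ(x(s), s) − φ(x(a), s)‖ ds ≤ λ T ε. Then for every t ∈ [0, L/ε], ‖∫₀^t φ(x(s), s) ds‖ ≤ λ L + c₀ T. -/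
open MeasureTheory

/-
Cut `[0, t]` into `⌊t/T⌋` full periods and a remainder of length `< T`. On a period
`[a, a + T]` the frozen integrand `φ (x a) ·` has zero mean, so the integral of `φ (x s) s`
over it is at most `∫ ‖φ (x s) s - φ (x a) s‖ ≤ λ T ε`; the at most `L / (ε T)` periods thus
contribute at most `λ L`, and the remainder at most `c₀ T`.
-/

section

variable {E : Type*} [NormedAddCommGroup E]

theorem ContinuousOn.intervalIntegrable_of_measurable_of_bounded
    {α : Type*} [TopologicalSpace α] [MeasurableSpace α] [BorelSpace α]
    [MeasurableSpace E] [BorelSpace E] [SecondCountableTopology E]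
    {φ : α → ℝ → E} (hφ : Measurable (fun p : α × ℝ => φ p.1 p.2)) {C : ℝ}
    (hC : ∀ X s, ‖φ X s‖ ≤ C) {x : ℝ → α} {a b : ℝ} (hx : ContinuousOn x (Set.uIcc a b)) :
    IntervalIntegrable (fun s => φ (x s) s) volume a b := by
  have : IsFiniteMeasure (volume.restrict (Set.uIcc a b)) := by
    rw [Set.uIcc]; infer_instance
  refine IntegrableOn.intervalIntegrable (Integrable.mono' (integrable_const C) ?_
    (Filter.Eventually.of_forall fun s => hC _ _))
  exact (hφ.comp_aemeasurable
    ((hx.aemeasurable measurableSet_uIcc).prodMk aemeasurable_id)).aestronglyMeasurable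

variable [NormedSpace ℝ E]

theorem norm_integral_le_integral_norm_sub_of_integral_eq_zero {μ : Measure ℝ} {f g : ℝ → E}
    {a b : ℝ} (hab : a ≤ b) (hf : IntervalIntegrable f μ a b) (hg : IntervalIntegrable g μ a b)
    (hg0 : ∫ x in a..b, g x ∂μ = 0) :
    ‖∫ x in a..b, f x ∂μ‖ ≤ ∫ x in a..b, ‖f x - g x‖ ∂μ := by
  have hsplit : ∫ x in a..b, f x ∂μ = ∫ x in a..b, f x - g x ∂μ := by
    rw [intervalIntegral.integral_sub hf hg, hg0, sub_zero]
  rw [hsplit]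
  exact intervalIntegral.norm_integral_le_integral_norm hab

theorem norm_integral_zero_natCast_mul_le {μ : Measure ℝ} {f : ℝ → E} {T δ : ℝ} {N : ℕ}
    (hf : ∀ k < N, IntervalIntegrable f μ (k * T) (k * T + T))
    (hwin : ∀ k < N, ‖∫ x in k * T..k * T + T, f x ∂μ‖ ≤ δ) :
    ‖∫ x in 0..N * T, f x ∂μ‖ ≤ N * δ := by
  have hnext (k : ℕ) : ((k + 1 : ℕ) : ℝ) * T = k * T + T := by push_cast; ring
  have hsum := intervalIntegral.sum_integral_adjacent_intervals (μ := μ) (f := f)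
    (a := fun k : ℕ => k * T) (n := N) fun k hk => by simpa only [hnext] using hf k hk
  simp only [hnext, Nat.cast_zero, zero_mul] at hsum
  rw [← hsum]
  calc ‖∑ k ∈ Finset.range N, ∫ x in k * T..k * T + T, f x ∂μ‖
      ≤ ∑ k ∈ Finset.range N, ‖∫ x in k * T..k * T + T, f x ∂μ‖ := norm_sum_le _ _
    _ ≤ ∑ _k ∈ Finset.range N, δ := Finset.sum_le_sum fun k hk => hwin k (Finset.mem_range.1 hk)
    _ = N * δ := by simp

theorem norm_integral_le_floor_mul_add {f : ℝ → E} {T t C δ : ℝ} (hT : 0 < T) (ht : 0 ≤ t)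
    (hC : 0 ≤ C) (hf : IntervalIntegrable f volume 0 t) (hbdd : ∀ s ∈ Set.Ioc 0 t, ‖f s‖ ≤ C)
    (hwin : ∀ a, 0 ≤ a → a + T ≤ t → ‖∫ s in a..a + T, f s‖ ≤ δ) :
    ‖∫ s in 0..t, f s‖ ≤ ⌊t / T⌋₊ * δ + C * T := by
  set N := ⌊t / T⌋₊
  have hNT : N * T ≤ t := (le_div_iff₀ hT).1 (Nat.floor_le (div_nonneg ht hT.le))
  have htN : t < N * T + T := by
    have := (div_lt_iff₀ hT).1 (Nat.lt_floor_add_one (t / T))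
    linarith
  have hNT0 : 0 ≤ (N : ℝ) * T := by positivity
  have hint {u v : ℝ} (hu : 0 ≤ u) (huv : u ≤ v) (hv : v ≤ t) : IntervalIntegrable f volume u v :=
    hf.mono_set (Set.uIcc_subset_uIcc (Set.mem_uIcc_of_le hu (huv.trans hv))
      (Set.mem_uIcc_of_le (hu.trans huv) hv))
  have hwindow {k : ℕ} (hk : k < N) : (k : ℝ) * T + T ≤ t := by
    have : (k : ℝ) + 1 ≤ N := by exact_mod_cast hk
    nlinarith
  have hperiods : ‖∫ s in 0..N * T, f s‖ ≤ N * δ :=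
    norm_integral_zero_natCast_mul_le
      (fun k hk => hint (by positivity) (by linarith) (hwindow hk))
      (fun k hk => hwin _ (by positivity) (hwindow hk))
  have hrest : ‖∫ s in N * T..t, f s‖ ≤ C * T := by
    refine (intervalIntegral.norm_integral_le_of_norm_le_const fun s hs => hbdd s ?_).trans ?_
    · rw [Set.uIoc_of_le hNT] at hs
      exact ⟨hNT0.trans_lt hs.1, hs.2⟩
    · rw [abs_of_nonneg (sub_nonneg.2 hNT)]
      exact mul_le_mul_of_nonneg_left (by linarith) hC
  rw [← intervalIntegral.integral_add_adjacent_intervals (hint le_rfl hNT0 hNT)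
    (hint hNT0 hNT le_rfl)]
  exact (norm_add_le _ _).trans (add_le_add hperiods hrest)

end

theorem besjes_lemma_extension_general
    {n m : ℕ} (T L ε lam c₀ : ℝ)
    (hT : 0 < T) (hε : 0 < ε) (hlam : 0 < lam)
    (φ : EuclideanSpace ℝ (Fin n) → ℝ → EuclideanSpace ℝ (Fin m))
    (hmeas : Measurable (fun p : EuclideanSpace ℝ (Fin n) × ℝ => φ p.1 p.2))
    (hper : ∀ (X : EuclideanSpace ℝ (Fin n)), Function.Periodic (φ X) T)
    (hzero : ∀ X : EuclideanSpace ℝ (Fin n), (∫ s in (0:ℝ)..T, φ X s) = 0)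
    (hbdd : ∀ (X : EuclideanSpace ℝ (Fin n)) (s : ℝ), ‖φ X s‖ ≤ c₀)
    (x : ℝ → EuclideanSpace ℝ (Fin n))
    (hx : ContinuousOn x (Set.Icc 0 (L/ε)))
    (hslow : ∀ a : ℝ, 0 ≤ a → a + T ≤ L/ε →
      (∫ s in a..(a + T), ‖φ (x s) s - φ (x a) s‖) ≤ lam * T * ε) :
    ∀ t ∈ Set.Icc (0:ℝ) (L/ε),
      ‖∫ s in (0:ℝ)..t, φ (x s) s‖ ≤ lam * L + c₀ * T := by
  rintro t ⟨ht0, htL⟩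
  have hint {a b : ℝ} (ha : 0 ≤ a) (hab : a ≤ b) (hb : b ≤ L / ε) :
      IntervalIntegrable (fun s => φ (x s) s) volume a b :=
    (hx.mono (by rw [Set.uIcc_of_le hab]; exact Set.Icc_subset_Icc ha hb)
      ).intervalIntegrable_of_measurable_of_bounded hmeas hbdd
  have hwin (a : ℝ) (ha : 0 ≤ a) (haT : a + T ≤ L / ε) :
      ‖∫ s in a..a + T, φ (x s) s‖ ≤ lam * T * ε := by
    refine (norm_integral_le_integral_norm_sub_of_integral_eq_zero (by linarith)
      (hint ha (by linarith) haT)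
      (continuousOn_const.intervalIntegrable_of_measurable_of_bounded hmeas hbdd) ?_).trans
      (hslow a ha haT)
    rw [(hper (x a)).intervalIntegral_add_eq a 0, zero_add, hzero]
  have hperiods : (⌊t / T⌋₊ : ℝ) * (lam * T * ε) ≤ lam * L := by
    have hNT : (⌊t / T⌋₊ : ℝ) * T ≤ L / ε :=
      ((le_div_iff₀ hT).1 (Nat.floor_le (div_nonneg ht0 hT.le))).trans htL
    calc (⌊t / T⌋₊ : ℝ) * (lam * T * ε) = lam * ε * (⌊t / T⌋₊ * T) := by ring
      _ ≤ lam * ε * (L / ε) := by gcongr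
      _ = lam * L := by field_simp
  refine (norm_integral_le_floor_mul_add hT ht0 ((norm_nonneg _).trans (hbdd 0 0))
    (hint le_rfl ht0 htL) (fun s _ => hbdd _ _)
    (fun a ha haT => hwin a ha (haT.trans htL))).trans ?_
  linarith

/-- extension of Besjes' lemma: the integral along a slowly
moving trajectory of a bounded, periodic, zero-mean perturbation that is
slowly-varying in average along the trajectory stays bounded by `λL + c₀T`
on the timescale `L/ε`. -/
theorem besjes_lemma_extension
    {n m : ℕ} (T L ε lam c₀ : ℝ)
    (hT : 0 < T) (hL : 0 < L) (hε : 0 < ε) (hlam : 0 < lam) (hc₀ : 0 < c₀)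
    (φ : EuclideanSpace ℝ (Fin n) → ℝ → EuclideanSpace ℝ (Fin m))
    (hmeas : Measurable (fun p : EuclideanSpace ℝ (Fin n) × ℝ => φ p.1 p.2))
    (hper : ∀ (X : EuclideanSpace ℝ (Fin n)), Function.Periodic (φ X) T)
    (hzero : ∀ X : EuclideanSpace ℝ (Fin n), (∫ s in (0:ℝ)..T, φ X s) = 0)
    (hbdd : ∀ (X : EuclideanSpace ℝ (Fin n)) (s : ℝ), ‖φ X s‖ ≤ c₀)
    (x : ℝ → EuclideanSpace ℝ (Fin n))
    (hx : ContinuousOn x (Set.Icc 0 (L/ε)))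
    (hslow : ∀ a : ℝ, 0 ≤ a → a + T ≤ L/ε →
      (∫ s in a..(a + T), ‖φ (x s) s - φ (x a) s‖) ≤ lam * T * ε) :
    ∀ t ∈ Set.Icc (0:ℝ) (L/ε),
      ‖∫ s in (0:ℝ)..t, φ (x s) s‖ ≤ lam * L + c₀ * T :=
  besjes_lemma_extension_general T L ε lam c₀ hT hε hlam φ hmeas hper hzero hbdd x hx hslow
end

section
/- (Gronwall estimate for the averaged comparison.) Let F : ℝⁿ → ℝⁿ be globally Lipschitz with constant λ_F > 0, let ε > 0, L > 0, c₁, c₂ ≥ 0, and X₀ ∈ ℝⁿ. Let X̄, X̃ : [0, L/ε] → ℝⁿ be continuous and satisfy, for all σ ∈ [0, L/ε], X̄(σ) = X₀ + ε∫₀^σ F(X̄(s)) ds and X̃(σ) = X₀ + ε∫₀^σ F(X̃(s)) ds + R(σ), where the remainder satisfies ‖R(σ)‖ ≤ c₁ε² + c₂ε³σ for all σ. Then for all σ ∈ [0, L/ε], ‖X̃(σ) − X̄(σ)‖ ≤ (c₁ + c₂/λ_F)·e^{λ_F ε σ}·ε², and in particular ‖X̃(σ) − X̄(σ)‖ ≤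 (c₁ + c₂/λ_F)·e^{λ_F L}·ε². -/
open MeasureTheory Set Real

/-! The difference `v = ‖X̃ - X̄‖` satisfies the linear integral inequality
`v σ ≤ c₁ε² + c₂ε³σ + λ_F ε ∫₀^σ v`. Its right-hand side `u` has derivative
`c₂ε³ + λ_F ε v ≤ c₂ε³ + λ_F ε u`, so the differential Grönwall inequality bounds `u`,
hence `v`, by `(c₁ε² + c₂ε²/λ_F) e^{λ_F ε σ} - c₂ε²/λ_F`. -/

theorem le_gronwallBound_of_le_add_mul_integral {v : ℝ → ℝ} {a b k T : ℝ} (hk : 0 ≤ k)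
    (hv : Continuous v) (h : ∀ σ ∈ Icc 0 T, v σ ≤ a + b * σ + k * ∫ s in 0..σ, v s) :
    ∀ σ ∈ Icc 0 T, v σ ≤ gronwallBound a k b σ := by
  set u : ℝ → ℝ := fun σ ↦ a + b * σ + k * ∫ s in 0..σ, v s
  have hu : ∀ σ, HasDerivAt u (b + k * v σ) σ := fun σ ↦ by
    have := (((hasDerivAt_id σ).const_mul b).const_add a).add
      ((hv.integral_hasStrictDerivAt 0 σ).hasDerivAt.const_mul k)
    rwa [mul_one] at this
  have hu_le : ∀ σ ∈ Icc 0 T, u σ ≤ gronwallBound a k b (σ - 0) :=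
    le_gronwallBound_of_liminf_deriv_right_le
      (fun σ _ ↦ (hu σ).continuousAt.continuousWithinAt)
      (fun σ _ _ hr ↦ (hu σ).hasDerivWithinAt.liminf_right_slope_le hr) (by simp [u])
      (fun σ hσ ↦ by
        linarith [mul_le_mul_of_nonneg_left (h σ (Ico_subset_Icc_self hσ)) hk])
  intro σ hσ
  simpa using (h σ hσ).trans (hu_le σ hσ)

theorem le_gronwallBound_of_le_add_mul_integral_of_continuousOn {v : ℝ → ℝ} {a b k T : ℝ}
    (hk : 0 ≤ k) (hv : ContinuousOn v (Icc 0 T))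
    (h : ∀ σ ∈ Icc 0 T, v σ ≤ a + b * σ + k * ∫ s in 0..σ, v s) :
    ∀ σ ∈ Icc 0 T, v σ ≤ gronwallBound a k b σ := by
  intro σ hσ
  have hT : 0 ≤ T := hσ.1.trans hσ.2
  obtain ⟨w, hw_cont, hw⟩ : ∃ w, Continuous w ∧ EqOn w v (Icc 0 T) :=
    ⟨IccExtend hT ((Icc 0 T).domRestrict v), continuous_IccExtend_iff.2 hv.domRestrict,
      fun τ hτ ↦ IccExtend_of_mem hT _ hτ⟩
  have hw_int : ∀ τ ∈ Icc 0 T, ∫ s in 0..τ, w s = ∫ s in 0..τ, v s := fun τ hτ ↦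
    intervalIntegral.integral_congr <| hw.mono <| by
      rw [uIcc_of_le hτ.1]; exact Icc_subset_Icc_right hτ.2
  rw [← hw hσ]
  refine le_gronwallBound_of_le_add_mul_integral hk hw_cont (fun τ hτ ↦ ?_) σ hσ
  rw [hw hτ, hw_int τ hτ]
  exact h τ hτ

theorem LipschitzWith.norm_integral_comp_sub_le {E E' : Type*} [NormedAddCommGroup E]
    [NormedAddCommGroup E'] [NormedSpace ℝ E'] {F : E → E'} {K : NNReal}
    (hF : LipschitzWith K F) {x y : ℝ → E} {a b : ℝ} (hab : a ≤ b)
    (hx : ContinuousOn x (Icc a b)) (hy : ContinuousOn y (Icc a b)) :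
    ‖(∫ s in a..b, F (x s)) - ∫ s in a..b, F (y s)‖ ≤ K * ∫ s in a..b, ‖x s - y s‖ := by
  have hFx : IntervalIntegrable (fun s ↦ F (x s)) volume a b :=
    (hF.continuous.comp_continuousOn hx).intervalIntegrable_of_Icc hab
  have hFy : IntervalIntegrable (fun s ↦ F (y s)) volume a b :=
    (hF.continuous.comp_continuousOn hy).intervalIntegrable_of_Icc hab
  rw [← intervalIntegral.integral_sub hFx hFy, ← intervalIntegral.integral_const_mul]
  exact intervalIntegral.norm_integral_le_of_norm_le hab (ae_of_all _ fun s _ ↦ hF.norm_sub_le _ _)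
    ((continuousOn_const.mul (hx.sub hy).norm).intervalIntegrable_of_Icc hab)

theorem norm_sub_le_of_eq_integral_add {E : Type*} [NormedAddCommGroup E] [NormedSpace ℝ E]
    {F : E → E} {K : NNReal} (hF : LipschitzWith K F) {x y R : ℝ → E} {x₀ : E} {ε σ : ℝ}
    (hε : 0 ≤ ε) (hσ : 0 ≤ σ) (hx : ContinuousOn x (Icc 0 σ)) (hy : ContinuousOn y (Icc 0 σ))
    (hx_eq : x σ = x₀ + (ε • ∫ s in 0..σ, F (x s)) + R σ)
    (hy_eq : y σ = x₀ + ε • ∫ s in 0..σ, F (y s)) :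
    ‖x σ - y σ‖ ≤ ‖R σ‖ + ε * K * ∫ s in 0..σ, ‖x s - y s‖ := by
  calc ‖x σ - y σ‖ = ‖ε • ((∫ s in 0..σ, F (x s)) - ∫ s in 0..σ, F (y s)) + R σ‖ := by
        rw [hx_eq, hy_eq, smul_sub]; abel_nf
    _ ≤ ε * (K * ∫ s in 0..σ, ‖x s - y s‖) + ‖R σ‖ := by
        refine (norm_add_le _ _).trans (add_le_add_left ?_ _)
        rw [norm_smul, norm_of_nonneg hε]
        exact mul_le_mul_of_nonneg_left (hF.norm_integral_comp_sub_le hσ hx hy) hε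
    _ = ‖R σ‖ + ε * K * ∫ s in 0..σ, ‖x s - y s‖ := by ring

theorem gronwall_averaged_comparison_general
    {n : ℕ} (F : EuclideanSpace ℝ (Fin n) → EuclideanSpace ℝ (Fin n))
    (lamF ε L c₁ c₂ : ℝ)
    (hlamF : 0 < lamF) (hε : 0 < ε) (hc₁ : 0 ≤ c₁) (hc₂ : 0 ≤ c₂)
    (hF : ∀ X Y : EuclideanSpace ℝ (Fin n), ‖F X - F Y‖ ≤ lamF * ‖X - Y‖)
    (X₀ : EuclideanSpace ℝ (Fin n))
    (Xbar Xtil R : ℝ → EuclideanSpace ℝ (Fin n))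
    (hXbar_cont : ContinuousOn Xbar (Set.Icc 0 (L/ε)))
    (hXtil_cont : ContinuousOn Xtil (Set.Icc 0 (L/ε)))
    (hXbar : ∀ σ ∈ Set.Icc (0:ℝ) (L/ε),
      Xbar σ = X₀ + ε • ∫ s in (0:ℝ)..σ, F (Xbar s))
    (hXtil : ∀ σ ∈ Set.Icc (0:ℝ) (L/ε),
      Xtil σ = X₀ + (ε • ∫ s in (0:ℝ)..σ, F (Xtil s)) + R σ)
    (hR : ∀ σ ∈ Set.Icc (0:ℝ) (L/ε), ‖R σ‖ ≤ c₁ * ε^2 + c₂ * ε^3 * σ) :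
    ∀ σ ∈ Set.Icc (0:ℝ) (L/ε),
      ‖Xtil σ - Xbar σ‖ ≤ (c₁ + c₂/lamF) * Real.exp (lamF * ε * σ) * ε^2 ∧
      ‖Xtil σ - Xbar σ‖ ≤ (c₁ + c₂/lamF) * Real.exp (lamF * L) * ε^2 := by
  have hlip : LipschitzWith lamF.toNNReal F :=
    .of_dist_le' fun X Y ↦ by simpa only [dist_eq_norm] using hF X Y
  have hk : 0 < lamF * ε := mul_pos hlamF hε
  have hgron := le_gronwallBound_of_le_add_mul_integral_of_continuousOn
    (v := fun s ↦ ‖Xtil s - Xbar s‖) (a := c₁ * ε ^ 2)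
    (b := c₂ * ε ^ 3) hk.le (hXtil_cont.sub hXbar_cont).norm fun σ hσ ↦ by
      have hsub : Icc 0 σ ⊆ Icc 0 (L / ε) := Icc_subset_Icc_right hσ.2
      have := norm_sub_le_of_eq_integral_add hlip hε.le hσ.1 (hXtil_cont.mono hsub)
        (hXbar_cont.mono hsub) (hXtil σ hσ) (hXbar σ hσ)
      rw [coe_toNNReal _ hlamF.le] at this
      linarith [hR σ hσ]
  intro σ hσ
  have hfirst : ‖Xtil σ - Xbar σ‖ ≤ (c₁ + c₂ / lamF) * exp (lamF * ε * σ) * ε ^ 2 := by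
    calc ‖Xtil σ - Xbar σ‖ ≤ gronwallBound (c₁ * ε ^ 2) (lamF * ε) (c₂ * ε ^ 3) σ := hgron σ hσ
      _ = (c₁ + c₂ / lamF) * exp (lamF * ε * σ) * ε ^ 2 - c₂ * ε ^ 2 / lamF := by
        rw [gronwallBound_of_K_ne_0 hk.ne']; field_simp; ring
      _ ≤ _ := sub_le_self _ (by positivity)
  have hεσ : lamF * ε * σ ≤ lamF * L := by
    rw [mul_assoc, mul_comm ε]
    exact mul_le_mul_of_nonneg_left ((le_div_iff₀ hε).1 hσ.2) hlamF.le
  exact ⟨hfirst, hfirst.trans (by gcongr)⟩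

/-- Gronwall estimate for the averaged comparison, Lemma 2 of
the paper in explicit form: if `X̃` solves the averaged integral equation up
to a remainder bounded by `c₁ε² + c₂ε³σ`, then `X̃ = X̄ + O(ε²)` on the
timescale `1/ε` in the fast time `σ`. -/
theorem gronwall_averaged_comparison
    {n : ℕ} (F : EuclideanSpace ℝ (Fin n) → EuclideanSpace ℝ (Fin n))
    (lamF ε L c₁ c₂ : ℝ)
    (hlamF : 0 < lamF) (hε : 0 < ε) (hL : 0 < L) (hc₁ : 0 ≤ c₁) (hc₂ : 0 ≤ c₂)
    (hF : ∀ X Y : EuclideanSpace ℝ (Fin n), ‖F X - F Y‖ ≤ lamF * ‖X - Y‖)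
    (X₀ : EuclideanSpace ℝ (Fin n))
    (Xbar Xtil R : ℝ → EuclideanSpace ℝ (Fin n))
    (hXbar_cont : ContinuousOn Xbar (Set.Icc 0 (L/ε)))
    (hXtil_cont : ContinuousOn Xtil (Set.Icc 0 (L/ε)))
    (hXbar : ∀ σ ∈ Set.Icc (0:ℝ) (L/ε),
      Xbar σ = X₀ + ε • ∫ s in (0:ℝ)..σ, F (Xbar s))
    (hXtil : ∀ σ ∈ Set.Icc (0:ℝ) (L/ε),
      Xtil σ = X₀ + (ε • ∫ s in (0:ℝ)..σ, F (Xtil s)) + R σ)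
    (hR : ∀ σ ∈ Set.Icc (0:ℝ) (L/ε), ‖R σ‖ ≤ c₁ * ε^2 + c₂ * ε^3 * σ) :
    ∀ σ ∈ Set.Icc (0:ℝ) (L/ε),
      ‖Xtil σ - Xbar σ‖ ≤ (c₁ + c₂/lamF) * Real.exp (lamF * ε * σ) * ε^2 ∧
      ‖Xtil σ - Xbar σ‖ ≤ (c₁ + c₂/lamF) * Real.exp (lamF * L) * ε^2 :=
  gronwall_averaged_comparison_general F lamF ε L c₁ c₂ hlamF hε hc₁ hc₂ hF X₀ Xbar Xtil R
    hXbar_cont hXtil_cont hXbar hXtil hR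
end

section
/- Let y_a : ℝ → ℝ be twice differentiable with |y_a''(t)| ≤ K for all t, and for ε > 0 let M_ε(y_a)(t) := (1/ε)∫_{t−ε}^{t} y_a(τ) dτ. Then the two-point extrapolation (3/2)·M_ε(y_a)(t) − (1/2)·M_ε(y_a)(t−ε) recovers y_a to second order: for all t, |(3/2)·M_ε(y_a)(t) − (1/2)·M_ε(y_a)(t−ε) − y_a(t)| ≤ K·ε². -/
/-!
Subtract the first-order Taylor polynomial of `y_a` at `t`. The moving average of an affine
function is its value at the midpoint of the window, so the extrapolation reproduces affine
functions exactly. The Taylor remainder is at most `K/2 · (τ - t)²`, whose averages over the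
windows `[t - ε, t]` and `[t - 2ε, t - ε]` are `Kε²/6` and `7Kε²/6`; hence the error is at most
`(3/2)(Kε²/6) + (1/2)(7Kε²/6) = (5/6) Kε²`.
-/

open MeasureTheory Set Interval

theorem abs_sub_sub_mul_deriv_le {f : ℝ → ℝ} {K : ℝ} (hf : Differentiable ℝ f)
    (hf' : Differentiable ℝ (deriv f)) (hK : ∀ t, |deriv (deriv f) t| ≤ K) (a x : ℝ) :
    |f x - f a - (x - a) * deriv f a| ≤ K / 2 * (x - a) ^ 2 := by
  have hlip : ∀ s, |deriv f s - deriv f a| ≤ K * |s - a| := fun s => by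
    simpa only [Real.norm_eq_abs] using Convex.norm_image_sub_le_of_norm_deriv_le
      (fun y _ => hf' y) (fun y _ => hK y) convex_univ (mem_univ a) (mem_univ s)
  have hftc : ∫ s in a..x, (deriv f s - deriv f a) = f x - f a - (x - a) * deriv f a := by
    rw [intervalIntegral.integral_sub (hf'.continuous.intervalIntegrable _ _)
        intervalIntegrable_const,
      intervalIntegral.integral_deriv_eq_sub (fun y _ => hf y)
        (hf'.continuous.intervalIntegrable _ _),
      intervalIntegral.integral_const, smul_eq_mul]
  calc |f x - f a - (x - a) * deriv f a|
      = ‖∫ s in Ι a x, (deriv f s - deriv f a)‖ := by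
        rw [← hftc, ← intervalIntegral.norm_intervalIntegral_eq, Real.norm_eq_abs]
    _ ≤ ∫ s in Ι a x, K * |s - a| ^ 1 := by
        refine norm_integral_le_of_norm_le ?_ (Filter.Eventually.of_forall fun s => ?_)
        · exact (continuous_const.mul
            ((continuous_id.sub continuous_const).abs.pow 1)).integrableOn_uIoc
        · simpa using hlip s
    _ = K / 2 * (x - a) ^ 2 := by
        rw [integral_const_mul, integral_pow_abs_sub_uIoc, sq_abs]; ring

noncomputable def movingAverage (ε : ℝ) (f : ℝ → ℝ) (t : ℝ) : ℝ :=
  (1 / ε) * ∫ τ in (t - ε)..t, f τ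

theorem movingAverage_sub_affine {f : ℝ → ℝ} (hf : Continuous f) {ε : ℝ} (hε : ε ≠ 0)
    (c d t₀ t : ℝ) :
    movingAverage ε (fun τ => f τ - c - (τ - t₀) * d) t
      = movingAverage ε f t - (c + d * (t - ε / 2 - t₀)) := by
  have haff : ∫ τ in (t - ε)..t, (τ - t₀) * d = ε * d * (t - ε / 2 - t₀) := by
    rw [intervalIntegral.integral_mul_const, intervalIntegral.integral_comp_sub_right (· : ℝ → ℝ),
      integral_id]
    ring
  unfold movingAverage
  rw [intervalIntegral.integral_sub
      ((by fun_prop : Continuous fun τ => f τ - c).intervalIntegrable _ _)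
      ((by fun_prop : Continuous fun τ : ℝ => (τ - t₀) * d).intervalIntegrable _ _),
    intervalIntegral.integral_sub (hf.intervalIntegrable _ _) intervalIntegrable_const,
    intervalIntegral.integral_const, haff, smul_eq_mul]
  field_simp
  ring

theorem abs_movingAverage_le {f g : ℝ → ℝ} (hg : Continuous g) {ε : ℝ} (hε : 0 < ε) {t : ℝ}
    (hfg : ∀ τ ∈ Icc (t - ε) t, |f τ| ≤ g τ) :
    |movingAverage ε f t| ≤ movingAverage ε g t := by
  unfold movingAverage
  rw [abs_mul, abs_of_pos (one_div_pos.2 hε)]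
  gcongr
  exact intervalIntegral.norm_integral_le_of_norm_le (by linarith)
    (Filter.Eventually.of_forall fun τ hτ =>
      (Real.norm_eq_abs _).trans_le (hfg τ (Ioc_subset_Icc_self hτ)))
    (hg.intervalIntegrable _ _)

theorem movingAverage_sub_const_sq {ε : ℝ} (hε : ε ≠ 0) (t₀ t : ℝ) :
    movingAverage ε (fun τ => (τ - t₀) ^ 2) t = ((t - t₀) ^ 3 - (t - ε - t₀) ^ 3) / (3 * ε) := by
  unfold movingAverage
  rw [intervalIntegral.integral_comp_sub_right (· ^ 2 : ℝ → ℝ), integral_pow]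
  field_simp
  ring

theorem movingAverage_const_mul (ε c : ℝ) (f : ℝ → ℝ) (t : ℝ) :
    movingAverage ε (fun τ => c * f τ) t = c * movingAverage ε f t := by
  simp only [movingAverage, intervalIntegral.integral_const_mul]
  ring

theorem abs_movingAverage_sub_taylor_le {y : ℝ → ℝ} {K : ℝ} (hy : Differentiable ℝ y)
    (hy' : Differentiable ℝ (deriv y)) (hK : ∀ t, |deriv (deriv y) t| ≤ K) {ε : ℝ} (hε : 0 < ε)
    (s t : ℝ) :
    |movingAverage ε y s - (y t + deriv y t * (s - ε / 2 - t))|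
      ≤ K / 2 * (((s - t) ^ 3 - (s - ε - t) ^ 3) / (3 * ε)) := by
  rw [← movingAverage_sub_affine hy.continuous hε.ne', ← movingAverage_sub_const_sq hε.ne',
    ← movingAverage_const_mul]
  exact abs_movingAverage_le (by fun_prop) hε fun τ _ => abs_sub_sub_mul_deriv_le hy hy' hK t τ

/-- the two-point extrapolation of the moving average recovers
the actual output to second order:
`(3/2) M_ε(y_a)(t) − (1/2) M_ε(y_a)(t−ε) = y_a(t) + O(ε²)`. -/
theorem moving_average_two_point_extrapolation
    (y_a : ℝ → ℝ) (K : ℝ)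
    (hy : Differentiable ℝ y_a)
    (hy' : Differentiable ℝ (deriv y_a))
    (hK : ∀ t : ℝ, |deriv (deriv y_a) t| ≤ K) :
    ∀ (ε : ℝ), 0 < ε → ∀ t : ℝ,
      |(3/2) * ((1/ε) * ∫ τ in (t - ε)..t, y_a τ)
        - (1/2) * ((1/ε) * ∫ τ in (t - ε - ε)..(t - ε), y_a τ)
        - y_a t| ≤ K * ε^2 := by
  intro ε hε t
  have hKε : 0 ≤ K * ε ^ 2 := mul_nonneg ((abs_nonneg _).trans (hK 0)) (sq_nonneg ε)
  have h₁ := abs_movingAverage_sub_taylor_le hy hy' hK hε t t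
  have h₂ := abs_movingAverage_sub_taylor_le hy hy' hK hε (t - ε) t
  have hb₁ : K / 2 * (((t - t) ^ 3 - (t - ε - t) ^ 3) / (3 * ε)) = K * ε ^ 2 / 6 := by
    field_simp; ring
  have hb₂ :
      K / 2 * (((t - ε - t) ^ 3 - (t - ε - ε - t) ^ 3) / (3 * ε)) = 7 * (K * ε ^ 2) / 6 := by
    field_simp; ring
  rw [hb₁, abs_le] at h₁
  rw [hb₂, abs_le] at h₂
  change |(3/2) * movingAverage ε y_a t - (1/2) * movingAverage ε y_a (t - ε) - y_a t| ≤ _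
  rw [abs_le]
  constructor <;> linarith [h₁.1, h₁.2, h₂.1, h₂.2]
end

section
/- Let ε > 0. Let u : ℝ → ℝ be Lipschitz with constant λ_u; let y_v : ℝ → ℝ satisfy |y_v(t)| ≤ K₁ε for all t and be Lipschitz with constant K₂ε; let s : ℝ × ℝ → ℝ be measurable, 1-periodic in its second argument with ∫₀¹ s(v,σ) dσ = 0 for every v, bounded by c_s, and Lipschitz in its first argument with constant λ_s uniformly in the second. Then for every t, the moving average of k_v(τ) := y_v(τ)·s(u(τ), τ/ε) satisfies |(1/ε)∫_{t−ε}^{t} y_v(τ)·s(u(τ), τ/ε) dτ| ≤ (K₂·c_s + K₁·λ_s·λ_u)·ε². -/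
/-!
Freeze the slow data at the left end `a = t - ε` of the averaging window. The frozen integrand
`y_v(a) · s(u(a), τ/ε)` runs through exactly one period of `s(u(a), ·)` on `[a, a + ε]`, so it
integrates to zero. By the Lipschitz bounds on `y_v`, `u` and `s(·, σ)`, the true integrand differs
from the frozen one by at most `(K₂ε · c_s + K₁ε · λ_s λ_u) |τ - a| ≤ (K₂ c_s + K₁ λ_s λ_u) ε²`,
and averaging keeps this bound.
-/

open MeasureTheory Function Set
open scoped Interval

lemma nonneg_of_abs_sub_le_mul {f : ℝ → ℝ} {L : ℝ} (h : ∀ s t, |f s - f t| ≤ L * |s - t|) :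
    0 ≤ L := by
  simpa using (abs_nonneg _).trans (h 1 0)

lemma continuous_of_abs_sub_le_mul_s13 {f : ℝ → ℝ} {L : ℝ}
    (h : ∀ s t, |f s - f t| ≤ L * |s - t|) : Continuous f :=
  (LipschitzWith.of_dist_le' h).continuous

lemma abs_mul_sub_mul_le_of_le {a b c d A B C D : ℝ} (hA : |a - c| ≤ A) (hB : |b| ≤ B)
    (hC : |c| ≤ C) (hD : |b - d| ≤ D) : |a * b - c * d| ≤ A * B + C * D :=
  calc |a * b - c * d| = |(a - c) * b + c * (b - d)| := by ring_nf
    _ ≤ |a - c| * |b| + |c| * |b - d| := by rw [← abs_mul, ← abs_mul]; exact abs_add_le _ _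
    _ ≤ A * B + C * D := by
      gcongr
      · exact (abs_nonneg _).trans hA
      · exact (abs_nonneg _).trans hC

section Integrals

variable {E : Type*} [NormedAddCommGroup E]

lemma intervalIntegrable_of_norm_le {f : ℝ → E} {M : ℝ} (hf : AEStronglyMeasurable f)
    (hM : ∀ x, ‖f x‖ ≤ M) (a b : ℝ) : IntervalIntegrable f volume a b :=
  (intervalIntegrable_iff.2 <|
    Measure.integrableOn_of_bounded measure_Ioc_lt_top.ne hf (ae_of_all _ hM))

variable [NormedSpace ℝ E]

lemma Function.Periodic.intervalIntegral_comp_div {f : ℝ → E} {T : ℝ} (hf : Periodic f T)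
    (a c : ℝ) : ∫ τ in a..a + c * T, f (τ / c) = c • ∫ x in 0..T, f x := by
  rcases eq_or_ne c 0 with rfl | hc
  · simp
  rw [intervalIntegral.integral_comp_div _ hc, add_div, mul_div_cancel_left₀ _ hc,
    hf.intervalIntegral_add_eq (a / c) 0, zero_add]

lemma norm_integral_le_of_norm_sub_le_of_integral_eq_zero {f g : ℝ → E} {a b M : ℝ}
    (hf : IntervalIntegrable f volume a b) (hg : IntervalIntegrable g volume a b)
    (hg₀ : ∫ x in a..b, g x = 0) (hfg : ∀ x ∈ Ι a b, ‖f x - g x‖ ≤ M) :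
    ‖∫ x in a..b, f x‖ ≤ M * |b - a| := by
  have : ∫ x in a..b, f x = ∫ x in a..b, f x - g x := by
    rw [intervalIntegral.integral_sub hf hg, hg₀, sub_zero]
  rw [this]
  exact intervalIntegral.norm_integral_le_of_norm_le_const hfg

end Integrals

lemma abs_mul_comp_sub_le {u y : ℝ → ℝ} {s : ℝ → ℝ → ℝ} {lam_u M_y L_y c_s lam_s : ℝ}
    (hu : ∀ s t, |u s - u t| ≤ lam_u * |s - t|) (hy_bdd : ∀ t, |y t| ≤ M_y)
    (hy_lip : ∀ s t, |y s - y t| ≤ L_y * |s - t|) (hs_bdd : ∀ v σ, |s v σ| ≤ c_s)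
    (hs_lip : ∀ v v' σ, |s v σ - s v' σ| ≤ lam_s * |v - v'|) (τ a σ : ℝ) :
    |y τ * s (u τ) σ - y a * s (u a) σ| ≤ (L_y * c_s + M_y * lam_s * lam_u) * |τ - a| := by
  have hs_comp : |s (u τ) σ - s (u a) σ| ≤ lam_s * (lam_u * |τ - a|) :=
    (hs_lip _ _ σ).trans
      (mul_le_mul_of_nonneg_left (hu τ a) (nonneg_of_abs_sub_le_mul (hs_lip · · 0)))
  calc _ ≤ L_y * |τ - a| * c_s + M_y * (lam_s * (lam_u * |τ - a|)) :=
        abs_mul_sub_mul_le_of_le (hy_lip τ a) (hs_bdd _ _) (hy_bdd a) hs_comp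
    _ = _ := by ring

lemma intervalIntegrable_mul_comp {y v : ℝ → ℝ} {s : ℝ → ℝ → ℝ} {M c : ℝ}
    (hy : Measurable y) (hv : Measurable v) (hs : Measurable fun p : ℝ × ℝ => s p.1 p.2)
    (hy_bdd : ∀ t, |y t| ≤ M) (hs_bdd : ∀ v σ, |s v σ| ≤ c) (ε a b : ℝ) :
    IntervalIntegrable (fun τ => y τ * s (v τ) (τ / ε)) volume a b := by
  refine intervalIntegrable_of_norm_le (f := fun τ => y τ * s (v τ) (τ / ε)) (M := M * c)
    (hy.mul (hs.comp (hv.prodMk (measurable_id.div_const ε)))).aestronglyMeasurable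
    (fun τ => ?_) a b
  rw [show ‖y τ * s (v τ) (τ / ε)‖ = |y τ| * |s (v τ) (τ / ε)| from abs_mul _ _]
  exact mul_le_mul (hy_bdd _) (hs_bdd _ _) (abs_nonneg _) ((abs_nonneg _).trans (hy_bdd τ))

lemma abs_integral_mul_comp_le {u y : ℝ → ℝ} {s : ℝ → ℝ → ℝ}
    {lam_u M_y L_y c_s lam_s : ℝ} (hu : ∀ s t, |u s - u t| ≤ lam_u * |s - t|)
    (hy_bdd : ∀ t, |y t| ≤ M_y) (hy_lip : ∀ s t, |y s - y t| ≤ L_y * |s - t|)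
    (hs_meas : Measurable fun p : ℝ × ℝ => s p.1 p.2) (hs_per : ∀ v, Periodic (s v) 1)
    (hs_zero : ∀ v, ∫ σ in (0 : ℝ)..1, s v σ = 0) (hs_bdd : ∀ v σ, |s v σ| ≤ c_s)
    (hs_lip : ∀ v v' σ, |s v σ - s v' σ| ≤ lam_s * |v - v'|) (a ε : ℝ) :
    |∫ τ in a..a + ε, y τ * s (u τ) (τ / ε)| ≤ (L_y * c_s + M_y * lam_s * lam_u) * ε ^ 2 := by
  have hfrozen : ∫ τ in a..a + ε, y a * s (u a) (τ / ε) = 0 := by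
    have h := (hs_per (u a)).intervalIntegral_comp_div a ε
    rw [mul_one, hs_zero, smul_zero] at h
    rw [intervalIntegral.integral_const_mul, h, mul_zero]
  have hL : 0 ≤ L_y * c_s + M_y * lam_s * lam_u := by
    have hL_y := nonneg_of_abs_sub_le_mul hy_lip
    have hlam_u := nonneg_of_abs_sub_le_mul hu
    have hlam_s := nonneg_of_abs_sub_le_mul (hs_lip · · 0)
    have hc_s := (abs_nonneg _).trans (hs_bdd 0 0)
    have hM_y := (abs_nonneg _).trans (hy_bdd 0)
    positivity
  have := norm_integral_le_of_norm_sub_le_of_integral_eq_zero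
    (intervalIntegrable_mul_comp (continuous_of_abs_sub_le_mul_s13 hy_lip).measurable
      (continuous_of_abs_sub_le_mul_s13 hu).measurable hs_meas hy_bdd hs_bdd ε a (a + ε))
    (intervalIntegrable_mul_comp measurable_const measurable_const hs_meas (fun _ => hy_bdd a)
      hs_bdd ε a (a + ε))
    hfrozen fun τ hτ => (abs_mul_comp_sub_le hu hy_bdd hy_lip hs_bdd hs_lip τ a _).trans
      (mul_le_mul_of_nonneg_left (abs_sub_left_of_mem_uIcc (uIoc_subset_uIcc hτ)) hL)
  rwa [Real.norm_eq_abs, add_sub_cancel_left, mul_assoc, abs_mul_abs_self, ← sq] at this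

/-- the moving average over one PWM period of the ripple term
`y_v(τ)·s(u(τ), τ/ε)` is `O(ε²)`, with explicit constant. -/
theorem moving_average_ripple_term_small
    (ε : ℝ) (hε : 0 < ε)
    (u : ℝ → ℝ) (lam_u : ℝ)
    (hu : ∀ s t : ℝ, |u s - u t| ≤ lam_u * |s - t|)
    (y_v : ℝ → ℝ) (K₁ K₂ : ℝ)
    (hyv_bdd : ∀ t : ℝ, |y_v t| ≤ K₁ * ε)
    (hyv_lip : ∀ s t : ℝ, |y_v s - y_v t| ≤ (K₂ * ε) * |s - t|)
    (s : ℝ → ℝ → ℝ)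
    (hs_meas : Measurable (fun p : ℝ × ℝ => s p.1 p.2))
    (hs_per : ∀ v : ℝ, Function.Periodic (s v) 1)
    (hs_zero : ∀ v : ℝ, (∫ σ in (0:ℝ)..1, s v σ) = 0)
    (c_s : ℝ) (hs_bdd : ∀ v σ : ℝ, |s v σ| ≤ c_s)
    (lam_s : ℝ)
    (hs_lip : ∀ v v' σ : ℝ, |s v σ - s v' σ| ≤ lam_s * |v - v'|) :
    ∀ t : ℝ,
      |(1/ε) * ∫ τ in (t - ε)..t, y_v τ * s (u τ) (τ/ε)|
        ≤ (K₂ * c_s + K₁ * lam_s * lam_u) * ε^2 := by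
  intro t
  have h := abs_integral_mul_comp_le hu hyv_bdd hyv_lip hs_meas hs_per hs_zero hs_bdd hs_lip
    (t - ε) ε
  rw [sub_add_cancel] at h
  rw [abs_mul, abs_of_pos (one_div_pos.2 hε)]
  calc 1 / ε * |∫ τ in (t - ε)..t, y_v τ * s (u τ) (τ / ε)|
      ≤ 1 / ε * ((K₂ * ε * c_s + K₁ * ε * lam_s * lam_u) * ε ^ 2) := by gcongr
    _ = _ := by field_simp
end

section
/- Let ε > 0. Let u : ℝ → ℝ be Lipschitz with constant λ_u; let y_v : ℝ → ℝ satisfy |y_v(t)| ≤ K₁ε for all t and be Lipschitz with constant K₂ε; let s : ℝ × ℝ → ℝ be measurable, 1-periodic in its second argument, bounded by c_s, and Lipschitz in its first argument with constant λ_s uniformly in the second. Then for every t, |(1/ε)∫_{t−ε}^{t} y_v(τ)·s(u(τ), τ/ε)² dτ − y_v(t)·∫₀¹ s(u(t),σ)² dσ| ≤ (K₂·c_s² + 2·K₁·c_s·λ_s·λ_u)·ε². -/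
/-!
Freeze the slow variables at time `t`. On a window of length `ε`, replacing `y_v τ` by `y_v t`
costs `K₂ ε · ε · c_s²`, and replacing `u τ` by `u t` inside `s²` costs `2 c_s λ_s λ_u ε`, weighted
by `|y_v t| ≤ K₁ ε`. The frozen integrand `τ ↦ s(u t, τ/ε)²` is `ε`-periodic, so its average over
the window is exactly its mean over one period.
-/

open MeasureTheory

theorem abs_sub_le_mul_of_abs_sub_le {f : ℝ → ℝ} {L δ a b : ℝ}
    (hf : ∀ x y, |f x - f y| ≤ L * |x - y|) (hab : |a - b| ≤ δ) :
    |f a - f b| ≤ L * δ := by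
  have hL : 0 ≤ L := by simpa using (abs_nonneg _).trans (hf 1 0)
  exact (hf a b).trans (mul_le_mul_of_nonneg_left hab hL)

theorem continuous_of_abs_sub_le_mul_s14 {f : ℝ → ℝ} {L : ℝ}
    (hf : ∀ x y, |f x - f y| ≤ L * |x - y|) : Continuous f :=
  (LipschitzWith.of_dist_le' (K := L) (by simpa only [Real.dist_eq] using hf)).continuous

theorem abs_mul_sq_sub_mul_sq_le {y y' a b c δy M δ : ℝ} (ha : |a| ≤ c) (hb : |b| ≤ c)
    (hy : |y - y'| ≤ δy) (hy' : |y'| ≤ M) (hab : |a - b| ≤ δ) :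
    |y * a ^ 2 - y' * b ^ 2| ≤ δy * c ^ 2 + M * (2 * c) * δ := by
  have ha2 : |a ^ 2| ≤ c ^ 2 := by
    rw [abs_pow]; exact pow_le_pow_left₀ (abs_nonneg a) ha 2
  have hapb : |a + b| ≤ 2 * c := (abs_add_le a b).trans (by linarith)
  have hδy : 0 ≤ δy := (abs_nonneg _).trans hy
  have hM : 0 ≤ M := (abs_nonneg _).trans hy'
  have hc : 0 ≤ c := (abs_nonneg _).trans ha
  calc |y * a ^ 2 - y' * b ^ 2| = |(y - y') * a ^ 2 + y' * (a + b) * (a - b)| := by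
        congr 1; ring
    _ ≤ |y - y'| * |a ^ 2| + |y'| * |a + b| * |a - b| :=
      (abs_add_le _ _).trans_eq (by simp only [abs_mul])
    _ ≤ δy * c ^ 2 + M * (2 * c) * δ := by gcongr

theorem intervalIntegrable_of_measurable_of_abs_le {f : ℝ → ℝ} {C : ℝ} (hf : Measurable f)
    (hC : ∀ x, |f x| ≤ C) (a b : ℝ) : IntervalIntegrable f volume a b :=
  (intervalIntegrable_iff.2 <| Measure.integrableOn_of_bounded measure_Ioc_lt_top.ne
    hf.aestronglyMeasurable (Filter.Eventually.of_forall hC))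

theorem Function.Periodic.intervalIntegral_comp_div_s14 {g : ℝ → ℝ} (hg : Function.Periodic g 1)
    {ε : ℝ} (hε : ε ≠ 0) (t : ℝ) :
    ∫ τ in (t - ε)..t, g (τ / ε) = ε * ∫ σ in (0 : ℝ)..1, g σ := by
  have hend : t / ε = (t - ε) / ε + 1 := by field_simp; ring
  rw [intervalIntegral.integral_comp_div g hε, hend, hg.intervalIntegral_add_eq _ 0, zero_add,
    smul_eq_mul]

theorem abs_average_sub_average_le {f g : ℝ → ℝ} {t ε M : ℝ} (hε : 0 < ε)
    (hf : IntervalIntegrable f volume (t - ε) t) (hg : IntervalIntegrable g volume (t - ε) t)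
    (hfg : ∀ τ ∈ Set.Ioc (t - ε) t, |f τ - g τ| ≤ M) :
    |(1 / ε) * (∫ τ in (t - ε)..t, f τ) - (1 / ε) * ∫ τ in (t - ε)..t, g τ| ≤ M := by
  have hint : |∫ τ in (t - ε)..t, (f τ - g τ)| ≤ M * ε := by
    have := intervalIntegral.norm_integral_le_of_norm_le_const (a := t - ε) (b := t)
      (f := fun τ => f τ - g τ) (C := M) (by rwa [Set.uIoc_of_le (by linarith)])
    rwa [sub_sub_cancel, abs_of_pos hε] at this
  rw [← mul_sub, ← intervalIntegral.integral_sub hf hg, abs_mul, abs_of_pos (by positivity)]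
  calc 1 / ε * |∫ τ in (t - ε)..t, (f τ - g τ)| ≤ 1 / ε * (M * ε) := by gcongr
    _ = M := by field_simp

/-- the moving average of the squared-ripple correlation term
`y_v(τ)·s(u(τ), τ/ε)²` equals `y_v(t)·∫₀¹ s(u(t),σ)² dσ` up to `O(ε²)`, with
explicit constant. -/
theorem moving_average_squared_ripple_correlation
    (ε : ℝ) (hε : 0 < ε)
    (u : ℝ → ℝ) (lam_u : ℝ)
    (hu : ∀ s t : ℝ, |u s - u t| ≤ lam_u * |s - t|)
    (y_v : ℝ → ℝ) (K₁ K₂ : ℝ)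
    (hyv_bdd : ∀ t : ℝ, |y_v t| ≤ K₁ * ε)
    (hyv_lip : ∀ s t : ℝ, |y_v s - y_v t| ≤ (K₂ * ε) * |s - t|)
    (s : ℝ → ℝ → ℝ)
    (hs_meas : Measurable (fun p : ℝ × ℝ => s p.1 p.2))
    (hs_per : ∀ v : ℝ, Function.Periodic (s v) 1)
    (c_s : ℝ) (hs_bdd : ∀ v σ : ℝ, |s v σ| ≤ c_s)
    (lam_s : ℝ)
    (hs_lip : ∀ v v' σ : ℝ, |s v σ - s v' σ| ≤ lam_s * |v - v'|) :
    ∀ t : ℝ,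
      |(1/ε) * (∫ τ in (t - ε)..t, y_v τ * (s (u τ) (τ/ε))^2)
          - y_v t * ∫ σ in (0:ℝ)..1, (s (u t) σ)^2|
        ≤ (K₂ * c_s^2 + 2 * K₁ * c_s * lam_s * lam_u) * ε^2 := by
  intro t
  have hsq_int (v : ℝ → ℝ) (hv : Continuous v) :
      IntervalIntegrable (fun τ => s (v τ) (τ / ε) ^ 2) volume (t - ε) t := by
    refine intervalIntegrable_of_measurable_of_abs_le (C := c_s ^ 2)
      ((hs_meas.comp (hv.measurable.prodMk (measurable_id.div_const ε))).pow_const 2)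
      (fun τ => ?_) _ _
    rw [abs_pow]
    exact pow_le_pow_left₀ (abs_nonneg _) (hs_bdd _ _) 2
  have hfrozen_mean : (1 / ε) * ∫ τ in (t - ε)..t, y_v t * s (u t) (τ / ε) ^ 2
      = y_v t * ∫ σ in (0 : ℝ)..1, s (u t) σ ^ 2 := by
    have hper : Function.Periodic (fun σ => s (u t) σ ^ 2) 1 := fun σ => by
      simp only [hs_per (u t) σ]
    rw [intervalIntegral.integral_const_mul, hper.intervalIntegral_comp_div_s14 hε.ne' t]
    field_simp
  rw [← hfrozen_mean]
  refine abs_average_sub_average_le hε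
    ((hsq_int u (continuous_of_abs_sub_le_mul_s14 hu)).continuousOn_mul
      (continuous_of_abs_sub_le_mul_s14 hyv_lip).continuousOn)
    ((hsq_int _ continuous_const).const_mul _) fun τ hτ => ?_
  have hτt : |τ - t| ≤ ε := abs_le.2 ⟨by linarith [hτ.1], by linarith [hτ.2]⟩
  refine (abs_mul_sq_sub_mul_sq_le (hs_bdd (u τ) (τ / ε)) (hs_bdd (u t) (τ / ε))
    (abs_sub_le_mul_of_abs_sub_le hyv_lip hτt) (hyv_bdd t)
    (abs_sub_le_mul_of_abs_sub_le (fun v v' => hs_lip v v' (τ / ε))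
      (abs_sub_le_mul_of_abs_sub_le hu hτt))).trans_eq ?_
  ring
end
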